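/- arXiv:1112.3696 — 5 statements merged into one kernel-verified Lean document; each statement's English description precedes it below -/
import Mathlib

section
/- Suppose the dynamical system (X,T,μ) satisfies the exponential concentration inequality with constant C > 0. Then there exists a constant D > 0, depending only on the system and the noise, such that for every ε > 0, every n ≥ 1, and every separately Lipschitz K : (ℝ^d)^n → ℝ, the observed system satisfies E_{μ_n ⊗ P^n}[exp(K(y_0,…,y_{n−1}) − E_{μ_n ⊗ P^n}[K(y_0,…,y_{n−1})])] ≤ exp(D (1 + ε²) Σ_{j=0}^{n−1} Lip_j(K)²). -/
open MeasureTheory Real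

noncomputable section

/-!
Average out the noise: put `K̃ z = E_ξ K (z + ε ξ)`. Averaging translates of `K` keeps the
separate Lipschitz constants, so the concentration of the system bounds
`E_x exp (K̃ (x, T x, …) - E K̃)` by `exp (C ∑ L_j²)`. For a fixed orbit, `ξ ↦ K (z + ε ξ)` is a
separately `ε L_j`-Lipschitz function of independent variables in the unit ball, so McDiarmid's
argument (Hoeffding's lemma in one coordinate at a time) bounds
`E_ξ exp (K (z + ε ξ) - K̃ z)` by `exp (ε² ∑ L_j² / 2)`. Fubini multiplies the two bounds.
-/

/-- `K` is separately Lipschitz in each of its `n` variables, with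
`L j` a Lipschitz constant for the `j`-th variable. -/
def SepLip {E : Type*} [PseudoMetricSpace E] {n : ℕ}
    (K : (Fin n → E) → ℝ) (L : Fin n → ℝ) : Prop :=
  ∀ (x : Fin n → E) (j : Fin n) (y : E),
    |K x - K (Function.update x j y)| ≤ L j * dist (x j) y

namespace SepLip

variable {E : Type*} {n : ℕ} {K : (Fin n → E) → ℝ} {L : Fin n → ℝ}

section PseudoMetric

variable [PseudoMetricSpace E]

theorem abs_sub_le_sum (hK : SepLip K L) (x y : Fin n → E) :
    |K x - K y| ≤ ∑ j, L j * dist (x j) (y j) := by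
  suffices h : ∀ s : Finset (Fin n),
      |K x - K (s.piecewise y x)| ≤ ∑ j ∈ s, L j * dist (x j) (y j) by
    simpa using h Finset.univ
  intro s
  induction s using Finset.induction_on with
  | empty => simp
  | insert a s ha ih =>
    have hstep := hK (s.piecewise y x) a (y a)
    rw [Finset.piecewise_eq_of_notMem _ _ _ ha] at hstep
    rw [Finset.piecewise_insert, Finset.sum_insert ha]
    calc |K x - K (Function.update (s.piecewise y x) a (y a))|
        ≤ |K x - K (s.piecewise y x)|
          + |K (s.piecewise y x) - K (Function.update (s.piecewise y x) a (y a))| :=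
          abs_sub_le _ _ _
      _ ≤ _ := by linarith

theorem lipschitzWith (hK : SepLip K L) : LipschitzWith (∑ j, |L j|).toNNReal K := by
  refine LipschitzWith.of_dist_le_mul fun x y => ?_
  rw [Real.dist_eq, Real.coe_toNNReal _ (by positivity), Finset.sum_mul]
  refine (hK.abs_sub_le_sum x y).trans (Finset.sum_le_sum fun j _ => ?_)
  exact mul_le_mul (le_abs_self _) (dist_le_pi_dist x y j) dist_nonneg (abs_nonneg _)

theorem abs_le_of_forall_dist_le (hK : SepLip K L) (c : Fin n → E) {r : ℝ} {x : Fin n → E}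
    (hx : ∀ i, dist (x i) (c i) ≤ r) : |K x| ≤ |K c| + r * ∑ j, |L j| := by
  have hsum : ∑ j, L j * dist (x j) (c j) ≤ r * ∑ j, |L j| := by
    rw [Finset.mul_sum]
    refine Finset.sum_le_sum fun j _ => ?_
    calc L j * dist (x j) (c j) ≤ |L j| * dist (x j) (c j) :=
          mul_le_mul_of_nonneg_right (le_abs_self _) dist_nonneg
      _ ≤ r * |L j| := by rw [mul_comm]; exact mul_le_mul_of_nonneg_right (hx j) (abs_nonneg _)
  linarith [hK.abs_sub_le_sum x c, abs_sub_abs_le_abs_sub (K x) (K c)]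

theorem comp_cons {K : (Fin (n + 1) → E) → ℝ} {L : Fin (n + 1) → ℝ} (hK : SepLip K L) (a : E) :
    SepLip (fun w => K (Fin.cons a w)) (fun j => L j.succ) := by
  intro w j y
  simpa [Fin.cons_update] using hK (Fin.cons a w) j.succ y

theorem abs_sub_cons_le {K : (Fin (n + 1) → E) → ℝ} {L : Fin (n + 1) → ℝ} (hK : SepLip K L)
    (a b : E) (w : Fin n → E) : |K (Fin.cons a w) - K (Fin.cons b w)| ≤ |L 0| * dist a b := by
  have h := hK (Fin.cons b w) 0 a
  rw [Fin.update_cons_zero, Fin.cons_zero, abs_sub_comm, dist_comm] at h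
  exact h.trans (mul_le_mul_of_nonneg_right (le_abs_self _) dist_nonneg)

end PseudoMetric

section AddGroup

variable [SeminormedAddCommGroup E]

theorem comp_add_right (hK : SepLip K L) (v : Fin n → E) :
    SepLip (fun z => K (fun i => z i + v i)) L := by
  intro z j y
  have h := hK (fun i => z i + v i) j (y + v j)
  rwa [dist_add_right, ← funext fun i => Function.apply_update (fun i x => x + v i) z j y i] at h

theorem comp_add_smul [NormedSpace ℝ E] (hK : SepLip K L) (z : Fin n → E) (ε : ℝ) :
    SepLip (fun ξ => K (fun i => z i + ε • ξ i)) (fun j => L j * |ε|) := by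
  intro ξ j y
  have h := hK (fun i => z i + ε • ξ i) j (z j + ε • y)
  rwa [dist_add_left, dist_smul₀, Real.norm_eq_abs, ← mul_assoc,
    ← funext fun i => Function.apply_update (fun i x => z i + ε • x) ξ j y i] at h

end AddGroup

end SepLip

theorem sepLip_integral {E : Type*} [PseudoMetricSpace E] {n : ℕ} {L : Fin n → ℝ}
    {Ω : Type*} [MeasurableSpace Ω] {ν : Measure Ω} [IsProbabilityMeasure ν]
    {K : Ω → (Fin n → E) → ℝ} (hK : ∀ ω, SepLip (K ω) L)
    (hint : ∀ x, Integrable (fun ω => K ω x) ν) :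
    SepLip (fun x => ∫ ω, K ω x ∂ν) L := by
  intro x j y
  rw [← integral_sub (hint x) (hint _)]
  simpa using norm_integral_le_of_norm_le_const (μ := ν) (Filter.Eventually.of_forall
    fun ω => (Real.norm_eq_abs _).le.trans (hK ω x j y))

theorem integral_exp_sub_integral_le_of_ae_abs_sub_le {Ω : Type*} [MeasurableSpace Ω]
    {μ : Measure Ω} [IsProbabilityMeasure μ] {X : Ω → ℝ} (hX : AEMeasurable X μ) {c δ : ℝ}
    (h : ∀ᵐ ω ∂μ, |X ω - c| ≤ δ) :
    ∫ ω, exp (X ω - ∫ ω', X ω' ∂μ) ∂μ ≤ exp (δ ^ 2 / 2) := by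
  have hIcc : ∀ᵐ ω ∂μ, X ω ∈ Set.Icc (c - δ) (c + δ) := by
    filter_upwards [h] with ω hω
    constructor <;> linarith [abs_le.1 hω]
  have := (ProbabilityTheory.hasSubgaussianMGF_of_mem_Icc hX hIcc).mgf_le 1
  simp only [ProbabilityTheory.mgf, one_mul, NNReal.coe_pow, NNReal.coe_div, coe_nnnorm,
    NNReal.coe_ofNat, one_pow, mul_one] at this
  convert this using 3
  rw [show c + δ - (c - δ) = 2 * δ by ring, Real.norm_eq_abs, abs_mul, mul_div_right_comm,
    abs_two, div_self two_ne_zero, one_mul, sq_abs]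

theorem integrable_exp_sub_of_ae_abs_le {α : Type*} [MeasurableSpace α] {μ : Measure α}
    [IsFiniteMeasure μ] {f : α → ℝ} (hf : AEStronglyMeasurable f μ) {B : ℝ}
    (hB : ∀ᵐ x ∂μ, |f x| ≤ B) (c : ℝ) : Integrable (fun x => exp (f x - c)) μ := by
  refine .of_bound (continuous_exp.comp_aestronglyMeasurable (hf.sub aestronglyMeasurable_const))
    (exp (B + |c|)) ?_
  filter_upwards [hB] with x hx
  rw [Real.norm_eq_abs, abs_exp, exp_le_exp]
  linarith [abs_le.1 hx, neg_abs_le c]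

theorem integral_exp_sub_integral_prod_le {α β : Type*} [MeasurableSpace α] [MeasurableSpace β]
    {μ : Measure α} {ν : Measure β} [IsProbabilityMeasure μ] [IsProbabilityMeasure ν]
    {F : α × β → ℝ} (hF : AEStronglyMeasurable F (μ.prod ν)) {B : ℝ}
    (hFB : ∀ᵐ p ∂μ.prod ν, |F p| ≤ B) {a b : ℝ}
    (hμ : ∫ x, exp (∫ y, F (x, y) ∂ν - ∫ x', ∫ y, F (x', y) ∂ν ∂μ) ∂μ ≤ exp a)
    (hν : ∀ᵐ x ∂μ, ∫ y, exp (F (x, y) - ∫ y', F (x, y') ∂ν) ∂ν ≤ exp b) :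
    ∫ p, exp (F p - ∫ q, F q ∂μ.prod ν) ∂μ.prod ν ≤ exp (a + b) := by
  set G : α → ℝ := fun x => ∫ y, F (x, y) ∂ν
  have hGB : ∀ᵐ x ∂μ, |G x| ≤ B := by
    filter_upwards [Measure.ae_ae_of_ae_prod hFB] with x hx
    simpa using norm_integral_le_of_norm_le_const (μ := ν)
      (hx.mono fun y hy => (Real.norm_eq_abs _).trans_le hy)
  rw [integral_prod F (.of_bound hF B (by simpa using hFB))]
  set m := ∫ x, G x ∂μ
  have hexpF := integrable_exp_sub_of_ae_abs_le hF hFB m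
  have hexpG := integrable_exp_sub_of_ae_abs_le hF.integral_prod_right' hGB m
  calc ∫ p, exp (F p - m) ∂μ.prod ν
      = ∫ x, ∫ y, exp (F (x, y) - m) ∂ν ∂μ := integral_prod _ hexpF
    _ ≤ ∫ x, exp (G x - m) * exp b ∂μ := by
        refine integral_mono_ae hexpF.integral_prod_left (hexpG.mul_const _) ?_
        filter_upwards [hν] with x hx
        calc ∫ y, exp (F (x, y) - m) ∂ν = exp (G x - m) * ∫ y, exp (F (x, y) - G x) ∂ν := by
              rw [← integral_const_mul]
              simp_rw [← exp_add, sub_add_sub_cancel']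
          _ ≤ exp (G x - m) * exp b := by gcongr
    _ = (∫ x, exp (G x - m) ∂μ) * exp b := integral_mul_const _ _
    _ ≤ exp (a + b) := by rw [exp_add]; gcongr

-- The first coordinate becomes the second factor, the inner one in
-- `integral_exp_sub_integral_prod_le`.
theorem integral_pi_succ_eq_integral_prod {E : Type*} [MeasurableSpace E] {n : ℕ}
    (P : Fin (n + 1) → Measure E) [∀ i, SigmaFinite (P i)] (f : (Fin (n + 1) → E) → ℝ) :
    ∫ ξ, f ξ ∂Measure.pi P
      = ∫ p, f (Fin.cons p.2 p.1) ∂(Measure.pi fun j => P j.succ).prod (P 0) := by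
  have := ((measurePreserving_piFinSuccAbove P 0).symm).integral_comp' f
  simp only [Fin.succAbove_zero] at this
  rw [← this, ← integral_prod_swap]
  simp [MeasurableEquiv.piFinSuccAbove_symm_apply, Fin.insertNthEquiv, Fin.insertNth_zero']

namespace SepLip

variable {E : Type*} [PseudoMetricSpace E] [MeasurableSpace E] [OpensMeasurableSpace E]
  [SecondCountableTopology E] {n : ℕ} {K : (Fin n → E) → ℝ} {L : Fin n → ℝ}

theorem integrable_pi (hK : SepLip K L) {P : Fin n → Measure E}
    [∀ i, IsProbabilityMeasure (P i)] (c : Fin n → E) {r : ℝ}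
    (hP : ∀ i, ∀ᵐ x ∂P i, dist x (c i) ≤ r) : Integrable K (Measure.pi P) :=
  have hbox : ∀ᵐ ξ ∂Measure.pi P, ∀ i, dist (ξ i) (c i) ≤ r :=
    Measure.ae_pi_le_pi (Filter.eventually_pi hP)
  .of_bound hK.lipschitzWith.continuous.aestronglyMeasurable (|K c| + r * ∑ j, |L j|)
    (hbox.mono fun _ hξ => (Real.norm_eq_abs _).trans_le (hK.abs_le_of_forall_dist_le c hξ))

theorem integral_exp_sub_integral_pi_le (hK : SepLip K L) (P : Fin n → Measure E)
    [∀ i, IsProbabilityMeasure (P i)] (c : Fin n → E) {r : ℝ}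
    (hP : ∀ i, ∀ᵐ x ∂P i, dist x (c i) ≤ r) :
    ∫ ξ, exp (K ξ - ∫ ζ, K ζ ∂Measure.pi P) ∂Measure.pi P
      ≤ exp (r ^ 2 / 2 * ∑ j, L j ^ 2) := by
  induction n with
  | zero =>
    have hconst : ∀ ξ : Fin 0 → E, K ξ = K isEmptyElim := fun ξ =>
      congrArg K (Subsingleton.elim _ _)
    simp [hconst]
  | succ n ih =>
    have hFB : ∀ᵐ p ∂(Measure.pi fun j => P j.succ).prod (P 0),
        |K (Fin.cons p.2 p.1)| ≤ |K c| + r * ∑ j, |L j| := by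
      filter_upwards [Measure.quasiMeasurePreserving_fst.ae
          (Measure.ae_pi_le_pi (Filter.eventually_pi fun j => hP j.succ)),
        Measure.quasiMeasurePreserving_snd.ae (hP 0)] with p hw ha
      refine hK.abs_le_of_forall_dist_le c fun i => Fin.cases ?_ (fun j => ?_) i
      · simpa using ha
      · simpa using hw j
    have hfirst : ∀ w, ∀ᵐ a ∂P 0, |K (Fin.cons a w) - K (Fin.cons (c 0) w)| ≤ |L 0| * r := by
      intro w
      filter_upwards [hP 0] with a ha
      exact (hK.abs_sub_cons_le a (c 0) w).trans (mul_le_mul_of_nonneg_left ha (abs_nonneg _))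
    have hcons : ∀ w, Continuous fun a => K (Fin.cons a w) := fun w =>
      hK.lipschitzWith.continuous.comp (continuous_id.finCons (A := fun _ => E) continuous_const)
    have hint : ∀ w, Integrable (fun a => K (Fin.cons a w)) (P 0) := fun w =>
      .of_bound (hcons w).aestronglyMeasurable (|K (Fin.cons (c 0) w)| + |L 0| * r)
        ((hfirst w).mono fun a ha => by
          rw [Real.norm_eq_abs]
          linarith [abs_sub_abs_le_abs_sub (K (Fin.cons a w)) (K (Fin.cons (c 0) w))])
    have hG := sepLip_integral (fun a => hK.comp_cons a) hint
    rw [integral_pi_succ_eq_integral_prod P K, integral_pi_succ_eq_integral_prod P]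
    calc _ ≤ exp (r ^ 2 / 2 * ∑ j : Fin n, L j.succ ^ 2 + (|L 0| * r) ^ 2 / 2) :=
          integral_exp_sub_integral_prod_le
            (hK.lipschitzWith.continuous.comp
              (continuous_snd.finCons (A := fun _ => E) continuous_fst)).aestronglyMeasurable
            hFB (ih hG _ (fun j => c j.succ) fun j => hP j.succ)
            (Filter.Eventually.of_forall fun w =>
              integral_exp_sub_integral_le_of_ae_abs_sub_le
                (hcons w).measurable.aemeasurable (hfirst w))
      _ = exp (r ^ 2 / 2 * ∑ j, L j ^ 2) := by
          rw [Fin.sum_univ_succ, mul_pow, sq_abs]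
          ring_nf

end SepLip

theorem ae_forall_norm_iterate_add_smul_le {E : Type*} [SeminormedAddCommGroup E]
    [NormedSpace ℝ E] [MeasurableSpace E] {X : Set E} {T : E → E} (hTX : Set.MapsTo T X X)
    {R : ℝ} (hR : ∀ x ∈ X, ‖x‖ ≤ R) {μ : Measure E} [SFinite μ] (hμ : ∀ᵐ x ∂μ, x ∈ X)
    {P : Measure E} [IsProbabilityMeasure P] (hP : ∀ᵐ ξ ∂P, ‖ξ‖ ≤ 1) {ε : ℝ} (hε : 0 ≤ ε)
    (n : ℕ) :
    ∀ᵐ p ∂μ.prod (Measure.pi fun _ : Fin n => P),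
      ∀ i : Fin n, ‖T^[(i : ℕ)] p.1 + ε • p.2 i‖ ≤ R + ε := by
  filter_upwards [Measure.quasiMeasurePreserving_fst.ae hμ,
    Measure.quasiMeasurePreserving_snd.ae (Measure.ae_pi_le_pi (Filter.eventually_pi fun _ => hP))]
    with p hx hξ i
  refine (norm_add_le _ _).trans (add_le_add (hR _ (hTX.iterate i hx)) ?_)
  rw [norm_smul, Real.norm_eq_abs, abs_of_nonneg hε]
  simpa using mul_le_mul_of_nonneg_left (hξ i) hε

theorem observed_system_exponential_concentration_general {d : ℕ}
    (X : Set (EuclideanSpace ℝ (Fin d))) (hX : IsCompact X)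
    (T : EuclideanSpace ℝ (Fin d) → EuclideanSpace ℝ (Fin d))
    (hT : Measurable T) (hTX : Set.MapsTo T X X)
    (μ : Measure (EuclideanSpace ℝ (Fin d))) [IsProbabilityMeasure μ]
    (hμX : μ X = 1)
    (C : ℝ)
    (hconc : ∀ (n : ℕ), 1 ≤ n → ∀ (K : (Fin n → EuclideanSpace ℝ (Fin d)) → ℝ)
      (L : Fin n → ℝ), SepLip K L →
      ∫ x, Real.exp (K (fun i => T^[(i : ℕ)] x)
          - ∫ z, K (fun i => T^[(i : ℕ)] z) ∂μ) ∂μ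
        ≤ Real.exp (C * ∑ j, L j ^ 2))
    (P : Measure (EuclideanSpace ℝ (Fin d))) [IsProbabilityMeasure P]
    (hP : ∀ᵐ ξ ∂P, ‖ξ‖ ≤ 1) :
    ∃ D : ℝ, 0 < D ∧ ∀ ε : ℝ, 0 < ε → ∀ (n : ℕ), 1 ≤ n →
      ∀ (K : (Fin n → EuclideanSpace ℝ (Fin d)) → ℝ) (L : Fin n → ℝ), SepLip K L →
      ∫ p, Real.exp (K (fun i => T^[(i : ℕ)] p.1 + ε • p.2 i)
          - ∫ p', K (fun i => T^[(i : ℕ)] p'.1 + ε • p'.2 i)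
              ∂(μ.prod (Measure.pi fun _ : Fin n => P)))
        ∂(μ.prod (Measure.pi fun _ : Fin n => P))
        ≤ Real.exp (D * (1 + ε ^ 2) * ∑ j, L j ^ 2) := by
  refine ⟨max C (1 / 2), by positivity, fun ε hε n hn K L hK => ?_⟩
  have hnoise : ∀ _ : Fin n, ∀ᵐ ξ ∂P, dist ξ 0 ≤ 1 := fun _ => by simpa using hP
  obtain ⟨R, hR⟩ := hX.isBounded.exists_norm_le
  have hFB : ∀ᵐ p ∂μ.prod (Measure.pi fun _ : Fin n => P),
      |K (fun i => T^[(i : ℕ)] p.1 + ε • p.2 i)| ≤ |K 0| + (R + ε) * ∑ j, |L j| :=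
    (ae_forall_norm_iterate_add_smul_le hTX hR
      (ae_iff.2 ((prob_compl_eq_zero_iff hX.isClosed.measurableSet).2 hμX)) hP hε.le n).mono
      fun p hp => hK.abs_le_of_forall_dist_le 0 (by simpa using hp)
  have hKt : SepLip (fun z => ∫ ξ, K (fun i => z i + ε • ξ i) ∂Measure.pi fun _ : Fin n => P) L :=
    sepLip_integral (fun ξ => hK.comp_add_right fun i => ε • ξ i)
      fun z => (hK.comp_add_smul z ε).integrable_pi 0 hnoise
  have hobs : Measurable fun p : _ × (Fin n → _) => fun i : Fin n => T^[(i : ℕ)] p.1 + ε • p.2 i :=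
    measurable_pi_lambda _ fun i => ((hT.iterate i).comp measurable_fst).add
      (((measurable_pi_apply i).comp measurable_snd).const_smul ε)
  calc _ ≤ exp (C * ∑ j, L j ^ 2 + 1 ^ 2 / 2 * ∑ j, (L j * |ε|) ^ 2) :=
        integral_exp_sub_integral_prod_le
          (hK.lipschitzWith.continuous.measurable.comp hobs).aestronglyMeasurable hFB
          (hconc n hn _ L hKt) (Filter.Eventually.of_forall fun x =>
            (hK.comp_add_smul (fun i => T^[(i : ℕ)] x) ε).integral_exp_sub_integral_pi_le _ 0
              hnoise)
    _ ≤ exp (max C (1 / 2) * (1 + ε ^ 2) * ∑ j, L j ^ 2) := by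
        have hS : 0 ≤ ∑ j, L j ^ 2 := by positivity
        simp_rw [mul_pow, sq_abs, ← Finset.sum_mul]
        gcongr
        nlinarith [le_max_left C (1 / 2), le_max_right C (1 / 2), mul_nonneg hS (sq_nonneg ε)]

/-- If the dynamical system `(X,T,μ)` satisfies the exponential concentration
inequality, then the system observed with i.i.d. noise of amplitude `ε`
satisfies an exponential concentration inequality with constant `D (1 + ε²)`. -/
theorem observed_system_exponential_concentration {d : ℕ}
    (X : Set (EuclideanSpace ℝ (Fin d))) (hX : IsCompact X)
    (T : EuclideanSpace ℝ (Fin d) → EuclideanSpace ℝ (Fin d))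
    (hT : Measurable T) (hTX : Set.MapsTo T X X)
    (μ : Measure (EuclideanSpace ℝ (Fin d))) [IsProbabilityMeasure μ]
    (hμX : μ X = 1) (hinv : μ.map T = μ)
    (C : ℝ) (hC : 0 < C)
    (hconc : ∀ (n : ℕ), 1 ≤ n → ∀ (K : (Fin n → EuclideanSpace ℝ (Fin d)) → ℝ)
      (L : Fin n → ℝ), SepLip K L →
      ∫ x, Real.exp (K (fun i => T^[(i : ℕ)] x)
          - ∫ z, K (fun i => T^[(i : ℕ)] z) ∂μ) ∂μ
        ≤ Real.exp (C * ∑ j, L j ^ 2))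
    (P : Measure (EuclideanSpace ℝ (Fin d))) [IsProbabilityMeasure P]
    (hP : ∀ᵐ ξ ∂P, ‖ξ‖ ≤ 1) :
    ∃ D : ℝ, 0 < D ∧ ∀ ε : ℝ, 0 < ε → ∀ (n : ℕ), 1 ≤ n →
      ∀ (K : (Fin n → EuclideanSpace ℝ (Fin d)) → ℝ) (L : Fin n → ℝ), SepLip K L →
      ∫ p, Real.exp (K (fun i => T^[(i : ℕ)] p.1 + ε • p.2 i)
          - ∫ p', K (fun i => T^[(i : ℕ)] p'.1 + ε • p'.2 i)
              ∂(μ.prod (Measure.pi fun _ : Fin n => P)))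
        ∂(μ.prod (Measure.pi fun _ : Fin n => P))
        ≤ Real.exp (D * (1 + ε ^ 2) * ∑ j, L j ^ 2) :=
  observed_system_exponential_concentration_general X hX T hT hTX μ hμX C hconc P hP
end
end

section
/- Suppose the dynamical system (X,T,μ) satisfies the exponential concentration inequality with constant C > 0. Let f : X → ℝ be Lipschitz with ∫ f dμ = 0, and set a_f = Lip(f)·‖f‖_∞. Then for every k ≥ 0, every n ≥ 1, and every t > 0, μ({x : |CÔV_n(k)(x) − Cov(k)| > t}) ≤ 2 exp(−(t² / (16 C a_f²)) · (n² / (n + k))). -/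
/-! On a set of full measure the estimator only sees `f` on `X`, so `f` may be replaced by a
Lipschitz extension `g` to all of `ℝ^d` with the same constant and sup bound. As a function of the
first `n + k` orbit points, the estimator for `g` is separately Lipschitz with constants
`2 a_f / n`, so the concentration inequality makes its deviation from the mean sub-Gaussian with
variance proxy `2 C (n + k) (2 a_f / n)²`. By invariance of `μ` that mean is `Cov(k)`, and the
Chernoff bound on both tails gives the claim. -/

open MeasureTheory Real

noncomputable section

open ProbabilityTheory Function
open scoped NNReal

lemma LipschitzOnWith.exists_lipschitzWith_abs_le {E : Type*} [PseudoMetricSpace E]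
    {f : E → ℝ} {s : Set E} {K : ℝ≥0} {M : ℝ} (hf : LipschitzOnWith K f s) (hM : 0 ≤ M)
    (hfM : ∀ x ∈ s, |f x| ≤ M) :
    ∃ g : E → ℝ, LipschitzWith K g ∧ Set.EqOn f g s ∧ ∀ x, |g x| ≤ M := by
  obtain ⟨g, hg, hfg⟩ := hf.extend_real
  refine ⟨fun x => max (-M) (min M (g x)), (hg.const_min M).const_max (-M), fun x hx => ?_,
    fun x => abs_le.2 ⟨le_max_left _ _, max_le (by linarith) (min_le_left _ _)⟩⟩
  obtain ⟨hlo, hhi⟩ := abs_le.1 (hfM x hx)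
  simp only [← hfg hx, min_eq_right hhi, max_eq_right hlo]

lemma sum_ite_apply_eq_le_of_injective {ι κ : Type*} [Fintype ι] [DecidableEq κ] {u : ι → κ}
    (hu : Injective u) (j : κ) {c : ℝ} (hc : 0 ≤ c) :
    ∑ i, (if u i = j then c else 0) ≤ c := by
  by_cases hj : ∃ i, u i = j
  · obtain ⟨i₀, rfl⟩ := hj
    classical
    simp_rw [hu.eq_iff]
    simp
  · push Not at hj
    simp [hj, hc]

namespace SepLip

variable {E : Type*} [PseudoMetricSpace E] {n : ℕ} {K : (Fin n → E) → ℝ} {L : Fin n → ℝ}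

lemma mono {L' : Fin n → ℝ} (h : SepLip K L) (hL : ∀ j, L j ≤ L' j) : SepLip K L' :=
  fun x j y => (h x j y).trans (mul_le_mul_of_nonneg_right (hL j) dist_nonneg)

lemma const_mul (h : SepLip K L) (c : ℝ) : SepLip (fun x => c * K x) (fun j => |c| * L j) := by
  intro x j y
  rw [← mul_sub, abs_mul, mul_assoc]
  exact mul_le_mul_of_nonneg_left (h x j y) (abs_nonneg c)

lemma sum {ι : Type*} (s : Finset ι) {K : ι → (Fin n → E) → ℝ} {L : ι → Fin n → ℝ}
    (h : ∀ i ∈ s, SepLip (K i) (L i)) :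
    SepLip (fun x => ∑ i ∈ s, K i x) (fun j => ∑ i ∈ s, L i j) := by
  intro x j y
  rw [← Finset.sum_sub_distrib, Finset.sum_mul]
  exact (Finset.abs_sum_le_sum_abs _ _).trans (Finset.sum_le_sum fun i hi => h i hi x j y)

end SepLip

section

variable {E : Type*} [PseudoMetricSpace E] {n : ℕ} {g : E → ℝ} {Lg : ℝ≥0} {M : ℝ}

lemma LipschitzWith.abs_sub_update_apply_le (hg : LipschitzWith Lg g) (x : Fin n → E)
    (j : Fin n) (y : E) (p : Fin n) :
    |g (x p) - g (update x j y p)| ≤ Lg * dist (x j) y * (if p = j then 1 else 0) := by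
  by_cases hp : p = j
  · subst hp
    simpa [← Real.dist_eq] using hg.dist_le_mul (x p) y
  · simp [hp]

lemma sepLip_mul_apply (hg : LipschitzWith Lg g) (hM : ∀ x, |g x| ≤ M) (p q : Fin n) :
    SepLip (fun x => g (x p) * g (x q))
      (fun j => Lg * M * ((if p = j then 1 else 0) + (if q = j then 1 else 0))) := by
  intro x j y
  set x' := update x j y
  have hsplit : g (x p) * g (x q) - g (x' p) * g (x' q)
      = g (x p) * (g (x q) - g (x' q)) + (g (x p) - g (x' p)) * g (x' q) := by ring
  calc |g (x p) * g (x q) - g (x' p) * g (x' q)|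
      ≤ |g (x p)| * |g (x q) - g (x' q)| + |g (x p) - g (x' p)| * |g (x' q)| := by
        rw [hsplit, ← abs_mul, ← abs_mul]; exact abs_add_le _ _
    _ ≤ M * (Lg * dist (x j) y * (if q = j then 1 else 0))
          + Lg * dist (x j) y * (if p = j then 1 else 0) * M := by
        gcongr
        · exact (abs_nonneg _).trans (hM (x p))
        · exact hM _
        · exact hg.abs_sub_update_apply_le x j y q
        · exact hg.abs_sub_update_apply_le x j y p
        · exact hM _
    _ = _ := by ring

end

/-- The estimator `CÔV_n(k)(x)`. -/
def empiricalCov {α : Type*} (T : α → α) (f : α → ℝ) (n k : ℕ) (x : α) : ℝ :=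
  (1 / (n : ℝ)) * ∑ i ∈ Finset.range n, f (T^[i] x) * f (T^[i + k] x)

def empiricalCovKernel {E : Type*} (g : E → ℝ) (n k : ℕ) (x : Fin (n + k) → E) : ℝ :=
  (1 / (n : ℝ)) * ∑ i : Fin n, g (x (Fin.castAdd k i)) * g (x (Fin.addNat i k))

section EmpiricalCov

variable {E : Type*} {g : E → ℝ} {n k : ℕ}

lemma empiricalCovKernel_orbit (T : E → E) (x : E) :
    empiricalCovKernel g n k (fun i => T^[(i : ℕ)] x) = empiricalCov T g n k x := by
  simp only [empiricalCovKernel, empiricalCov, Fin.val_castAdd, Fin.val_addNat]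
  rw [Fin.sum_univ_eq_sum_range (fun i => g (T^[i] x) * g (T^[i + k] x))]

lemma abs_empiricalCovKernel_le {M : ℝ} (hM : ∀ x, |g x| ≤ M) (hM0 : 0 ≤ M)
    (x : Fin (n + k) → E) : |empiricalCovKernel g n k x| ≤ M ^ 2 := by
  rcases n.eq_zero_or_pos with rfl | hn
  · simp [empiricalCovKernel, sq_nonneg]
  have hsum : |∑ i : Fin n, g (x (Fin.castAdd k i)) * g (x (Fin.addNat i k))| ≤ n * M ^ 2 :=
    calc _ ≤ ∑ i : Fin n, |g (x (Fin.castAdd k i)) * g (x (Fin.addNat i k))| :=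
          Finset.abs_sum_le_sum_abs _ _
      _ ≤ ∑ _i : Fin n, M ^ 2 := by
          gcongr with i
          rw [abs_mul, sq]
          exact mul_le_mul (hM _) (hM _) (abs_nonneg _) hM0
      _ = n * M ^ 2 := by simp
  rw [empiricalCovKernel, abs_mul, abs_of_pos (by positivity)]
  calc 1 / (n : ℝ) * |_| ≤ 1 / n * (n * M ^ 2) := by gcongr
    _ = M ^ 2 := by field_simp

lemma sepLip_empiricalCovKernel [PseudoMetricSpace E] {Lg : ℝ≥0} {M : ℝ}
    (hg : LipschitzWith Lg g) (hM : ∀ x, |g x| ≤ M) (hM0 : 0 ≤ M) :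
    SepLip (empiricalCovKernel g n k) (fun _ => 2 * Lg * M / n) := by
  refine ((SepLip.sum Finset.univ fun i _ =>
    sepLip_mul_apply hg hM (Fin.castAdd k i) (Fin.addNat i k)).const_mul (1 / (n : ℝ))).mono ?_
  intro j
  have hLM : 0 ≤ (Lg : ℝ) * M := by positivity
  have hcount : ∑ i : Fin n, (Lg : ℝ) * M *
      ((if Fin.castAdd k i = j then 1 else 0) + (if Fin.addNat i k = j then 1 else 0))
      ≤ Lg * M + Lg * M := by
    simp only [mul_add, mul_ite, mul_one, mul_zero, Finset.sum_add_distrib]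
    gcongr
    · exact sum_ite_apply_eq_le_of_injective (Fin.castAdd_injective n k) j hLM
    · exact sum_ite_apply_eq_le_of_injective (fun a b h => by simpa using h) j hLM
  rw [abs_of_nonneg (by positivity)]
  calc 1 / (n : ℝ) * _ ≤ 1 / n * (Lg * M + Lg * M) := by gcongr
    _ = 2 * Lg * M / n := by ring

lemma empiricalCov_eqOn {T : E → E} {f : E → ℝ} {s : Set E} (hTs : Set.MapsTo T s s)
    (hfg : Set.EqOn f g s) :
    Set.EqOn (empiricalCov T f n k) (empiricalCov T g n k) s := fun x hx => by
  simp only [empiricalCov]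
  congr 1
  exact Finset.sum_congr rfl fun i _ => by
    rw [hfg (hTs.iterate i hx), hfg (hTs.iterate (i + k) hx)]

end EmpiricalCov

section Concentration

variable {Ω : Type*} [MeasurableSpace Ω] {μ : Measure Ω}

lemma hasSubgaussianMGF_of_expConcentration {E : Type*} [PseudoMetricSpace E]
    [IsProbabilityMeasure μ] {m : ℕ} {Y : Ω → Fin m → E} {C : ℝ} (hC : 0 ≤ C)
    (hconc : ∀ (K : (Fin m → E) → ℝ) (L : Fin m → ℝ), SepLip K L →
      ∫ ω, exp (K (Y ω) - ∫ z, K (Y z) ∂μ) ∂μ ≤ exp (C * ∑ j, L j ^ 2))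
    {K : (Fin m → E) → ℝ} {L : Fin m → ℝ} (hK : SepLip K L)
    (hKY : AEStronglyMeasurable (fun ω => K (Y ω)) μ) {B : ℝ} (hB : ∀ x, |K x| ≤ B) :
    HasSubgaussianMGF (fun ω => K (Y ω) - ∫ z, K (Y z) ∂μ)
      (2 * C * ∑ j, L j ^ 2).toNNReal μ where
  integrable_exp_mul t := by
    refine Integrable.of_bound (continuous_exp.comp_aestronglyMeasurable
      ((hKY.sub aestronglyMeasurable_const).const_mul t)) (exp (|t| * (B + |∫ z, K (Y z) ∂μ|)))
      (ae_of_all _ fun ω => ?_)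
    rw [norm_of_nonneg (exp_pos _).le, exp_le_exp]
    calc t * (K (Y ω) - ∫ z, K (Y z) ∂μ) ≤ |t| * |K (Y ω) - ∫ z, K (Y z) ∂μ| := by
          rw [← abs_mul]; exact le_abs_self _
      _ ≤ |t| * (B + |∫ z, K (Y z) ∂μ|) := by
          gcongr
          exact (abs_sub _ _).trans (by gcongr; exact hB _)
  mgf_le t := by
    have h := hconc _ _ (hK.const_mul t)
    simp only [integral_const_mul, ← mul_sub, mul_pow, sq_abs, ← Finset.mul_sum] at h
    rw [mgf, Real.coe_toNNReal _ (by positivity)]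
    exact h.trans_eq (by ring_nf)

lemma ProbabilityTheory.HasSubgaussianMGF.measureReal_lt_abs_le [IsFiniteMeasure μ]
    {X : Ω → ℝ} {c : ℝ≥0} (h : HasSubgaussianMGF X c μ) {ε : ℝ} (hε : 0 ≤ ε) :
    μ.real {ω | ε < |X ω|} ≤ 2 * exp (-ε ^ 2 / (2 * c)) := by
  have hsub : {ω | ε < |X ω|} ⊆ {ω | ε ≤ X ω} ∪ {ω | ε ≤ (-X) ω} :=
    fun ω (hω : ε < |X ω|) => by
      rcases lt_abs.1 hω with hω | hω
      exacts [Or.inl hω.le, Or.inr hω.le]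
  calc μ.real {ω | ε < |X ω|} ≤ μ.real {ω | ε ≤ X ω} + μ.real {ω | ε ≤ (-X) ω} :=
        (measureReal_mono hsub).trans (measureReal_union_le _ _)
    _ ≤ exp (-ε ^ 2 / (2 * c)) + exp (-ε ^ 2 / (2 * c)) :=
        add_le_add (h.measure_ge_le hε) (h.neg.measure_ge_le hε)
    _ = 2 * exp (-ε ^ 2 / (2 * c)) := (two_mul _).symm

end Concentration

section Stationarity

variable {α : Type*} [MeasurableSpace α] {μ : Measure α} {T : α → α} {g : α → ℝ}

lemma MeasureTheory.MeasurePreserving.integral_comp_iterate (hT : MeasurePreserving T μ μ)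
    {h : α → ℝ} (hh : AEStronglyMeasurable h μ) (i : ℕ) :
    ∫ x, h (T^[i] x) ∂μ = ∫ x, h x ∂μ := by
  have hTi := hT.iterate i
  rw [← integral_map hTi.aemeasurable (hTi.map_eq.symm ▸ hh), hTi.map_eq]

lemma measurable_empiricalCov (hT : Measurable T) (hg : Measurable g) (n k : ℕ) :
    Measurable (empiricalCov T g n k) :=
  (Finset.measurable_sum _ fun i _ =>
    (hg.comp (hT.iterate i)).mul (hg.comp (hT.iterate (i + k)))).const_mul _

lemma integral_empiricalCov [IsFiniteMeasure μ] (hT : MeasurePreserving T μ μ)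
    (hg : Measurable g) {M : ℝ} (hM : ∀ x, |g x| ≤ M) {n : ℕ} (hn : n ≠ 0) (k : ℕ) :
    ∫ x, empiricalCov T g n k x ∂μ = ∫ x, g x * g (T^[k] x) ∂μ := by
  have hgk : Measurable fun x => g x * g (T^[k] x) := hg.mul (hg.comp (hT.measurable.iterate k))
  have hterm : ∀ i,
      ∫ x, g (T^[i] x) * g (T^[i + k] x) ∂μ = ∫ x, g x * g (T^[k] x) ∂μ := by
    intro i
    simp_rw [add_comm i k, iterate_add_apply]
    exact hT.integral_comp_iterate hgk.aestronglyMeasurable i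
  have hint : ∀ i, Integrable (fun x => g (T^[i] x) * g (T^[i + k] x)) μ := fun i =>
    Integrable.of_bound ((hg.comp (hT.measurable.iterate i)).mul
      (hg.comp (hT.measurable.iterate (i + k)))).aestronglyMeasurable (M * M)
      (ae_of_all _ fun x => by
        rw [norm_mul]; exact mul_le_mul (hM _) (hM _) (norm_nonneg _) ((abs_nonneg _).trans (hM x)))
  simp only [empiricalCov, integral_const_mul, integral_finsetSum _ fun i _ => hint i, hterm,
    Finset.sum_const, Finset.card_range, nsmul_eq_mul]
  field_simp

end Stationarity

theorem autocovariance_deviation_exponential_general {d : ℕ}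
    (X : Set (EuclideanSpace ℝ (Fin d))) (hX : IsCompact X)
    (T : EuclideanSpace ℝ (Fin d) → EuclideanSpace ℝ (Fin d))
    (hT : Measurable T) (hTX : Set.MapsTo T X X)
    (μ : Measure (EuclideanSpace ℝ (Fin d))) [IsProbabilityMeasure μ]
    (hμX : μ X = 1) (hinv : μ.map T = μ)
    (C : ℝ) (hC : 0 < C)
    (hconc : ∀ (n : ℕ), 1 ≤ n → ∀ (K : (Fin n → EuclideanSpace ℝ (Fin d)) → ℝ)
      (L : Fin n → ℝ), SepLip K L →
      ∫ x, Real.exp (K (fun i => T^[(i : ℕ)] x)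
          - ∫ z, K (fun i => T^[(i : ℕ)] z) ∂μ) ∂μ
        ≤ Real.exp (C * ∑ j, L j ^ 2))
    (f : EuclideanSpace ℝ (Fin d) → ℝ)
    (Lf Mf : ℝ) (hLf : 0 ≤ Lf) (hMf : 0 ≤ Mf)
    (hfLip : ∀ x ∈ X, ∀ y ∈ X, |f x - f y| ≤ Lf * dist x y)
    (hfBdd : ∀ x ∈ X, |f x| ≤ Mf) :
    ∀ (k : ℕ) (n : ℕ), 1 ≤ n → ∀ t : ℝ, 0 < t →
      (μ {x | t < |(1 / (n : ℝ)) * ∑ i ∈ Finset.range n,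
            f (T^[i] x) * f (T^[i + k] x)
          - ∫ z, f z * f (T^[k] z) ∂μ|}).toReal
        ≤ 2 * Real.exp (-(t ^ 2 / (16 * C * (Lf * Mf) ^ 2))
            * ((n : ℝ) ^ 2 / ((n : ℝ) + (k : ℝ)))) := by
  intro k n hn t ht
  have hX_ae : ∀ᵐ x ∂μ, x ∈ X :=
    (ae_mem_iff_measure_eq hX.isClosed.measurableSet.nullMeasurableSet).2 (by simp [hμX])
  obtain ⟨g, hg_lip, hfg, hg_bdd⟩ :=
    (LipschitzOnWith.of_dist_le' hfLip).exists_lipschitzWith_abs_le hMf hfBdd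
  have hg : Measurable g := hg_lip.continuous.measurable
  have hsg := hasSubgaussianMGF_of_expConcentration hC.le (hconc (n + k) (by omega))
    (sepLip_empiricalCovKernel (n := n) (k := k) hg_lip hg_bdd hMf)
    (by simpa only [empiricalCovKernel_orbit] using
      (measurable_empiricalCov hT hg n k).aestronglyMeasurable)
    (abs_empiricalCovKernel_le hg_bdd hMf)
  simp only [empiricalCovKernel_orbit,
    integral_empiricalCov ⟨hT, hinv⟩ hg hg_bdd (by omega : n ≠ 0)] at hsg
  have hcov : ∫ z, f z * f (T^[k] z) ∂μ = ∫ z, g z * g (T^[k] z) ∂μ :=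
    integral_congr_ae (hX_ae.mono fun x hx =>
      congrArg₂ (· * ·) (hfg hx) (hfg (hTX.iterate k hx)))
  have hdev : (fun x => empiricalCov T f n k x - ∫ z, f z * f (T^[k] z) ∂μ)
      =ᵐ[μ] (fun x => empiricalCov T g n k x - ∫ z, g z * g (T^[k] z) ∂μ) :=
    hX_ae.mono fun x hx => by simp only [hcov, empiricalCov_eqOn hTX hfg hx]
  calc _ = μ.real {x | t < |empiricalCov T g n k x - ∫ z, g z * g (T^[k] z) ∂μ|} :=
        measureReal_congr (hdev.fun_comp fun y => t < |y|)
    _ ≤ _ := hsg.measureReal_lt_abs_le ht.le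
    _ = _ := by
      -- no case split on `Lf * Mf = 0`: then both exponents are `0`, by `x / 0 = 0`
      have hn0 : (n : ℝ) ≠ 0 := by positivity
      rw [Real.coe_toNNReal _ (by positivity), Real.coe_toNNReal _ hLf, Finset.sum_const,
        Finset.card_univ, Fintype.card_fin, nsmul_eq_mul, neg_div, neg_mul, div_mul_div_comm,
        ← div_div_eq_mul_div]
      congr 3
      field_simp
      push_cast
      ring

/-- Deviation bound for the empirical estimator of the auto-covariance function of a
Lipschitz observable `f` (with Lipschitz constant `Lf` and sup norm bound `Mf` on `X`,
`a_f = Lf * Mf`), for a system satisfying the exponential concentration inequality: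
`μ(|Côv_n(k) - Cov(k)| > t) ≤ 2 exp(-(t²/(16 C a_f²)) (n²/(n+k)))`. -/
theorem autocovariance_deviation_exponential {d : ℕ}
    (X : Set (EuclideanSpace ℝ (Fin d))) (hX : IsCompact X)
    (T : EuclideanSpace ℝ (Fin d) → EuclideanSpace ℝ (Fin d))
    (hT : Measurable T) (hTX : Set.MapsTo T X X)
    (μ : Measure (EuclideanSpace ℝ (Fin d))) [IsProbabilityMeasure μ]
    (hμX : μ X = 1) (hinv : μ.map T = μ)
    (C : ℝ) (hC : 0 < C)
    (hconc : ∀ (n : ℕ), 1 ≤ n → ∀ (K : (Fin n → EuclideanSpace ℝ (Fin d)) → ℝ)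
      (L : Fin n → ℝ), SepLip K L →
      ∫ x, Real.exp (K (fun i => T^[(i : ℕ)] x)
          - ∫ z, K (fun i => T^[(i : ℕ)] z) ∂μ) ∂μ
        ≤ Real.exp (C * ∑ j, L j ^ 2))
    (f : EuclideanSpace ℝ (Fin d) → ℝ) (hf : Measurable f)
    (Lf Mf : ℝ) (hLf : 0 ≤ Lf) (hMf : 0 ≤ Mf)
    (hfLip : ∀ x ∈ X, ∀ y ∈ X, |f x - f y| ≤ Lf * dist x y)
    (hfBdd : ∀ x ∈ X, |f x| ≤ Mf)
    (hf0 : ∫ x, f x ∂μ = 0) :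
    ∀ (k : ℕ) (n : ℕ), 1 ≤ n → ∀ t : ℝ, 0 < t →
      (μ {x | t < |(1 / (n : ℝ)) * ∑ i ∈ Finset.range n,
            f (T^[i] x) * f (T^[i + k] x)
          - ∫ z, f z * f (T^[k] z) ∂μ|}).toReal
        ≤ 2 * Real.exp (-(t ^ 2 / (16 * C * (Lf * Mf) ^ 2))
            * ((n : ℝ) ^ 2 / ((n : ℝ) + (k : ℝ)))) :=
  autocovariance_deviation_exponential_general X hX T hT hTX μ hμX hinv C hC hconc f Lf Mf hLf hMf
    hfLip hfBdd
end
end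

section
/- Suppose the dynamical system (X,T,μ) satisfies the exponential concentration inequality with constant C > 0. Let f : ℝ^d → ℝ be Lipschitz and bounded with ∫_X f dμ = 0, and set a_f = Lip(f)·‖f‖_∞. Then there exists a constant D > 0 such that for every ε > 0, every k ≥ 0, every n ≥ 1, and every t > 0, the observed estimator C̃ov_n(k) = (1/n) Σ_{i=0}^{n−1} f(y_i) f(y_{i+k}) satisfies μ_{n+k} ⊗ P^{n+k}(|C̃ov_n(k) − Cov(k)| > t + 2 a_f ε) ≤ 2 exp(−(t² / (64 D a_f² (1 + ε²))) · (n² / (n + k))) + 2 exp(−(t² / (16 C a_f²)) · (n² / (n + k))). -/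
open MeasureTheory Real

noncomputable section

lemma prod_diff_bound {E : Type*} [PseudoMetricSpace E]
    (f : E → ℝ) (Lf Mf : ℝ) (hLf : 0 ≤ Lf) (hMf : 0 ≤ Mf)
    (hfLip : ∀ x y, |f x - f y| ≤ Lf * dist x y)
    (hfBdd : ∀ x, |f x| ≤ Mf) (u v u' v' : E) :
    |f u * f v - f u' * f v'| ≤ Lf * Mf * dist u u' + Lf * Mf * dist v v' := by
  have h1 : f u * f v - f u' * f v' = f u * (f v - f v') + f v' * (f u - f u') := by ring
  calc |f u * f v - f u' * f v'|
      ≤ |f u * (f v - f v')| + |f v' * (f u - f u')| := by rw [h1]; exact abs_add_le _ _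
    _ = |f u| * |f v - f v'| + |f v'| * |f u - f u'| := by rw [abs_mul, abs_mul]
    _ ≤ Mf * (Lf * dist v v') + Mf * (Lf * dist u u') := by
        gcongr <;> [exact hfBdd u; exact hfLip v v'; exact hfBdd v'; exact hfLip u u']
    _ = Lf * Mf * dist u u' + Lf * Mf * dist v v' := by ring

lemma sum_ite_inj_le {n m : ℕ} (u : Fin n → Fin m) (hu : Function.Injective u)
    (j : Fin m) (D : ℝ) (hD : 0 ≤ D) :
    (∑ i : Fin n, if u i = j then D else 0) ≤ D := by
  by_cases h : ∃ i, u i = j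
  · obtain ⟨i0, h0⟩ := h
    rw [Finset.sum_eq_single i0]
    · simp [h0]
    · intro i _ hi
      have : u i ≠ j := fun e => hi (hu (e.trans h0.symm))
      simp [this]
    · simp
  · push_neg at h
    simp [h, hD]

lemma sepLip_aux {E : Type*} [PseudoMetricSpace E] {n m : ℕ}
    (f : E → ℝ) (Lf Mf : ℝ) (hLf : 0 ≤ Lf) (hMf : 0 ≤ Mf)
    (hfLip : ∀ x y, |f x - f y| ≤ Lf * dist x y)
    (hfBdd : ∀ x, |f x| ≤ Mf)
    (u v : Fin n → Fin m) (hu : Function.Injective u) (hv : Function.Injective v)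
    (c : ℝ) :
    SepLip (fun x => c * ∑ i : Fin n, f (x (u i)) * f (x (v i)))
      (fun _ => |c| * (2 * (Lf * Mf))) := by
  intro x j y
  set x' := Function.update x j y with hx'def
  set D := dist (x j) y with hDdef
  have hD : 0 ≤ D := dist_nonneg
  have hdist : ∀ l, dist (x l) (x' l) = if l = j then D else 0 := by
    intro l
    rw [hx'def, Function.update_apply]
    split <;> simp_all
  have hterm : ∀ i : Fin n,
      |f (x (u i)) * f (x (v i)) - f (x' (u i)) * f (x' (v i))|
        ≤ Lf * Mf * (if u i = j then D else 0) + Lf * Mf * (if v i = j then D else 0) := by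
    intro i
    have := prod_diff_bound f Lf Mf hLf hMf hfLip hfBdd (x (u i)) (x (v i)) (x' (u i)) (x' (v i))
    rwa [hdist (u i), hdist (v i)] at this
  have hsum : |(∑ i : Fin n, f (x (u i)) * f (x (v i)))
      - ∑ i : Fin n, f (x' (u i)) * f (x' (v i))| ≤ 2 * (Lf * Mf) * D := by
    rw [← Finset.sum_sub_distrib]
    calc |∑ i : Fin n, (f (x (u i)) * f (x (v i)) - f (x' (u i)) * f (x' (v i)))|
        ≤ ∑ i : Fin n, |f (x (u i)) * f (x (v i)) - f (x' (u i)) * f (x' (v i))| :=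
          Finset.abs_sum_le_sum_abs _ _
      _ ≤ ∑ i : Fin n, (Lf * Mf * (if u i = j then D else 0)
            + Lf * Mf * (if v i = j then D else 0)) := Finset.sum_le_sum fun i _ => hterm i
      _ = Lf * Mf * (∑ i : Fin n, if u i = j then D else 0)
            + Lf * Mf * (∑ i : Fin n, if v i = j then D else 0) := by
          rw [Finset.sum_add_distrib, Finset.mul_sum, Finset.mul_sum]
      _ ≤ Lf * Mf * D + Lf * Mf * D := by
          have h1 := sum_ite_inj_le u hu j D hD
          have h2 := sum_ite_inj_le v hv j D hD
          have h3 : (0:ℝ) ≤ Lf * Mf := mul_nonneg hLf hMf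
          nlinarith
      _ = 2 * (Lf * Mf) * D := by ring
  calc |c * (∑ i : Fin n, f (x (u i)) * f (x (v i)))
        - c * ∑ i : Fin n, f (x' (u i)) * f (x' (v i))|
      = |c| * |(∑ i : Fin n, f (x (u i)) * f (x (v i)))
          - ∑ i : Fin n, f (x' (u i)) * f (x' (v i))| := by rw [← mul_sub, abs_mul]
    _ ≤ |c| * (2 * (Lf * Mf) * D) := mul_le_mul_of_nonneg_left hsum (abs_nonneg c)
    _ = |c| * (2 * (Lf * Mf)) * D := by ring

/-- Deviation bound for the observed empirical estimator of the auto-covariance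
function `C̃ov_n(k) = (1/n) ∑ f(y_i) f(y_{i+k})`, `y_i = T^i x + ε ξ_i`, of a bounded
Lipschitz observable `f` (Lipschitz constant `Lf`, bound `Mf`, `a_f = Lf Mf`), for a
system satisfying the exponential concentration inequality. -/
theorem observed_autocovariance_deviation_exponential {d : ℕ}
    (X : Set (EuclideanSpace ℝ (Fin d))) (hX : IsCompact X)
    (T : EuclideanSpace ℝ (Fin d) → EuclideanSpace ℝ (Fin d))
    (hT : Measurable T) (hTX : Set.MapsTo T X X)
    (μ : Measure (EuclideanSpace ℝ (Fin d))) [IsProbabilityMeasure μ]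
    (hμX : μ X = 1) (hinv : μ.map T = μ)
    (C : ℝ) (hC : 0 < C)
    (hconc : ∀ (n : ℕ), 1 ≤ n → ∀ (K : (Fin n → EuclideanSpace ℝ (Fin d)) → ℝ)
      (L : Fin n → ℝ), SepLip K L →
      ∫ x, Real.exp (K (fun i => T^[(i : ℕ)] x)
          - ∫ z, K (fun i => T^[(i : ℕ)] z) ∂μ) ∂μ
        ≤ Real.exp (C * ∑ j, L j ^ 2))
    (P : Measure (EuclideanSpace ℝ (Fin d))) [IsProbabilityMeasure P]
    (hP : ∀ᵐ ξ ∂P, ‖ξ‖ ≤ 1)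
    (f : EuclideanSpace ℝ (Fin d) → ℝ) (hf : Measurable f)
    (Lf Mf : ℝ) (hLf : 0 ≤ Lf) (hMf : 0 ≤ Mf)
    (hfLip : ∀ x y, |f x - f y| ≤ Lf * dist x y)
    (hfBdd : ∀ x, |f x| ≤ Mf)
    (hf0 : ∫ x, f x ∂μ = 0) :
    ∃ D : ℝ, 0 < D ∧ ∀ ε : ℝ, 0 < ε → ∀ (k : ℕ) (n : ℕ), 1 ≤ n → ∀ t : ℝ, 0 < t →
      ((μ.prod (Measure.pi fun _ : Fin (n + k) => P))
          {p | t + 2 * (Lf * Mf) * ε <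
            |(1 / (n : ℝ)) * ∑ i : Fin n,
                f (T^[(i : ℕ)] p.1
                    + ε • p.2 ⟨i, Nat.lt_of_lt_of_le i.isLt (Nat.le_add_right n k)⟩)
                  * f (T^[(i : ℕ) + k] p.1
                    + ε • p.2 ⟨(i : ℕ) + k, Nat.add_lt_add_right i.isLt k⟩)
              - ∫ z, f z * f (T^[k] z) ∂μ|}).toReal
        ≤ 2 * Real.exp (-(t ^ 2 / (64 * D * (Lf * Mf) ^ 2 * (1 + ε ^ 2)))
              * ((n : ℝ) ^ 2 / ((n : ℝ) + (k : ℝ))))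
          + 2 * Real.exp (-(t ^ 2 / (16 * C * (Lf * Mf) ^ 2))
              * ((n : ℝ) ^ 2 / ((n : ℝ) + (k : ℝ)))) := by
  classical
  refine ⟨1, one_pos, ?_⟩
  intro ε hε k n hn t ht
  set ν : Measure (Fin (n + k) → EuclideanSpace ℝ (Fin d)) :=
    Measure.pi fun _ : Fin (n + k) => P with hν
  have hnR : (0:ℝ) < (n:ℝ) := by exact_mod_cast hn
  have hnR' : ((n:ℝ)) ≠ 0 := hnR.ne'
  have hnkR : (0:ℝ) < (n:ℝ) + (k:ℝ) := by positivity
  have htoReal1 : ∀ s : Set (EuclideanSpace ℝ (Fin d) × (Fin (n+k) → EuclideanSpace ℝ (Fin d))),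
      ((μ.prod ν) s).toReal ≤ 1 := by
    intro s
    calc ((μ.prod ν) s).toReal ≤ ((1 : ENNReal)).toReal :=
          ENNReal.toReal_mono ENNReal.one_ne_top prob_le_one
      _ = 1 := by simp
  by_cases haz : Lf * Mf = 0
  · rw [haz]
    refine le_trans (htoReal1 _) ?_
    norm_num [div_zero]
  have hA : 0 < Lf * Mf := lt_of_le_of_ne (mul_nonneg hLf hMf) (Ne.symm haz)
  have hnkN : 1 ≤ n + k := le_trans hn (Nat.le_add_right n k)
  set I : ℝ := ∫ z, f z * f (T^[k] z) ∂μ with hIdef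
  set Sn : EuclideanSpace ℝ (Fin d) → ℝ :=
    fun x => ∑ i : Fin n, f (T^[(i : ℕ)] x) * f (T^[(i : ℕ) + k] x) with hSndef
  have hfT : ∀ j : ℕ, Measurable fun x => f (T^[j] x) := fun j => hf.comp (hT.iterate j)
  have hSnMeas : Measurable Sn := Finset.measurable_sum _ fun i _ => (hfT _).mul (hfT _)
  have hbdd_int : ∀ g : EuclideanSpace ℝ (Fin d) → ℝ, Measurable g →
      ∀ B : ℝ, (∀ x, |g x| ≤ B) → Integrable g μ := by
    intro g hg B hB
    exact Integrable.mono' (integrable_const B) hg.aestronglyMeasurable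
      (ae_of_all μ fun x => by rw [Real.norm_eq_abs]; exact hB x)
  have htermBdd : ∀ (j l : ℕ) (x : EuclideanSpace ℝ (Fin d)),
      |f (T^[j] x) * f (T^[l] x)| ≤ Mf * Mf := by
    intro j l x
    rw [abs_mul]
    exact mul_le_mul (hfBdd _) (hfBdd _) (abs_nonneg _) hMf
  have hterm_int : ∀ j l : ℕ, Integrable (fun x => f (T^[j] x) * f (T^[l] x)) μ :=
    fun j l => hbdd_int _ ((hfT j).mul (hfT l)) (Mf * Mf) (htermBdd j l)
  have hmap : ∀ i : ℕ, μ.map T^[i] = μ := by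
    intro i
    induction i with
    | zero => simp
    | succ i ih =>
      rw [Function.iterate_succ', ← Measure.map_map hT (hT.iterate i), ih, hinv]
  have hint_inv : ∀ i : ℕ, ∫ x, f (T^[i] x) * f (T^[i + k] x) ∂μ = I := by
    intro i
    have hg : Measurable fun z => f z * f (T^[k] z) := hf.mul (hfT k)
    have h1 : ∀ x : EuclideanSpace ℝ (Fin d),
        f (T^[i] x) * f (T^[i + k] x) = f (T^[i] x) * f (T^[k] (T^[i] x)) := by
      intro x
      rw [add_comm i k, Function.iterate_add_apply]
    calc ∫ x, f (T^[i] x) * f (T^[i + k] x) ∂μ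
        = ∫ x, (fun z => f z * f (T^[k] z)) (T^[i] x) ∂μ := by simp_rw [h1]
      _ = ∫ z, f z * f (T^[k] z) ∂(μ.map T^[i]) :=
          (integral_map (hT.iterate i).aemeasurable hg.aestronglyMeasurable).symm
      _ = I := by rw [hmap i]
  have hSnInt : ∫ x, Sn x ∂μ = (n : ℝ) * I := by
    rw [hSndef]
    rw [integral_finset_sum _ fun (i : Fin n) _ => hterm_int (i : ℕ) ((i : ℕ) + k)]
    simp [hint_inv, Finset.sum_const, Finset.card_univ, nsmul_eq_mul]
  have hSnBdd : ∀ x, |Sn x| ≤ (n : ℝ) * (Mf * Mf) := by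
    intro x
    calc |Sn x| ≤ ∑ i : Fin n, |f (T^[(i : ℕ)] x) * f (T^[(i : ℕ) + k] x)| :=
          Finset.abs_sum_le_sum_abs _ _
      _ ≤ ∑ _i : Fin n, Mf * Mf := Finset.sum_le_sum fun i _ => htermBdd _ _ x
      _ = (n : ℝ) * (Mf * Mf) := by
          simp [Finset.sum_const, Finset.card_univ, nsmul_eq_mul]
  have hb0 : ∀ x, |f x * f (T^[k] x)| ≤ Mf * Mf := by
    intro x
    rw [abs_mul]
    exact mul_le_mul (hfBdd _) (hfBdd _) (abs_nonneg _) hMf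
  have hIbdd : |I| ≤ Mf * Mf := by
    rw [hIdef, ← Real.norm_eq_abs]
    refine le_trans (norm_integral_le_integral_norm _) ?_
    calc ∫ z, ‖f z * f (T^[k] z)‖ ∂μ
        ≤ ∫ _z, Mf * Mf ∂μ := by
          refine integral_mono (hbdd_int _ (hf.mul (hfT k)) (Mf * Mf) hb0).norm
            (integrable_const _) fun x => ?_
          rw [Real.norm_eq_abs]
          exact hb0 x
      _ = Mf * Mf := by simp
  set lam : ℝ := t * (n:ℝ)^2 / (8 * C * (Lf * Mf)^2 * ((n:ℝ) + (k:ℝ))) with hlamdef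
  have hden : 0 < 8 * C * (Lf * Mf)^2 * ((n:ℝ) + (k:ℝ)) :=
    mul_pos (mul_pos (mul_pos (by norm_num) hC) (pow_pos hA 2)) hnkR
  have hlam_pos : 0 < lam := div_pos (mul_pos ht (pow_pos hnR 2)) hden
  have tail : ∀ s : ℝ, |s| = 1 →
      (μ {x | t ≤ s * ((1/(n:ℝ)) * Sn x - I)}).toReal
        ≤ Real.exp (-(t^2/(16*C*(Lf*Mf)^2)) * ((n:ℝ)^2/((n:ℝ)+(k:ℝ)))) := by
    intro s hs
    set Xv : EuclideanSpace ℝ (Fin d) → ℝ := fun x => s * ((1/(n:ℝ)) * Sn x - I) with hXv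
    have hgoal : {x | t ≤ s * ((1/(n:ℝ)) * Sn x - I)} = {x | t ≤ Xv x} := rfl
    rw [hgoal]
    have hXmeas : Measurable Xv :=
      measurable_const.mul ((measurable_const.mul hSnMeas).sub measurable_const)
    have hXbdd : ∀ x, |Xv x| ≤ Mf * Mf + Mf * Mf := by
      intro x
      have hx1 : |Xv x| = |(1/(n:ℝ)) * Sn x - I| := by
        simp only [hXv, abs_mul, hs, one_mul]
      have h1 : |(1/(n:ℝ)) * Sn x - I| ≤ |(1/(n:ℝ)) * Sn x| + |I| := abs_sub _ _
      have h2 : |(1/(n:ℝ)) * Sn x| ≤ Mf * Mf := by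
        rw [abs_mul, abs_of_pos (by positivity : (0:ℝ) < 1/(n:ℝ))]
        calc (1/(n:ℝ)) * |Sn x| ≤ (1/(n:ℝ)) * ((n:ℝ) * (Mf*Mf)) :=
              mul_le_mul_of_nonneg_left (hSnBdd x) (by positivity)
          _ = Mf * Mf := by field_simp
      rw [hx1]
      linarith [hIbdd]
    have hexp_int : Integrable (fun ω => Real.exp (lam * Xv ω)) μ := by
      refine hbdd_int _ (Real.measurable_exp.comp (measurable_const.mul hXmeas))
        (Real.exp (lam * (Mf*Mf + Mf*Mf))) fun x => ?_
      rw [abs_of_pos (Real.exp_pos _)]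
      apply Real.exp_le_exp.mpr
      calc lam * Xv x ≤ lam * |Xv x| := mul_le_mul_of_nonneg_left (le_abs_self _) hlam_pos.le
        _ ≤ lam * (Mf*Mf + Mf*Mf) := mul_le_mul_of_nonneg_left (hXbdd x) hlam_pos.le
    have hchern := ProbabilityTheory.measure_ge_le_exp_mul_mgf (μ := μ) (X := Xv) t
      hlam_pos.le hexp_int
    set u : Fin n → Fin (n + k) :=
      fun i => ⟨i, Nat.lt_of_lt_of_le i.isLt (Nat.le_add_right n k)⟩ with hu_def
    set v : Fin n → Fin (n + k) :=
      fun i => ⟨(i:ℕ) + k, Nat.add_lt_add_right i.isLt k⟩ with hv_def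
    have hu : Function.Injective u := by
      intro i j h
      have h2 := congrArg Fin.val h
      simp only [hu_def] at h2
      exact Fin.ext h2
    have hv : Function.Injective v := by
      intro i j h
      have h2 := congrArg Fin.val h
      simp only [hv_def] at h2
      exact Fin.ext (by omega)
    set c : ℝ := s * lam / (n:ℝ) with hcdef
    set K : (Fin (n+k) → EuclideanSpace ℝ (Fin d)) → ℝ :=
      fun x => c * ∑ i : Fin n, f (x (u i)) * f (x (v i)) with hKdef
    have hSep : SepLip K (fun _ => |c| * (2 * (Lf * Mf))) :=
      sepLip_aux f Lf Mf hLf hMf hfLip hfBdd u v hu hv c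
    have hconc' := hconc (n+k) hnkN K _ hSep
    have hKorb : ∀ x : EuclideanSpace ℝ (Fin d),
        K (fun i : Fin (n+k) => T^[(i:ℕ)] x) = c * Sn x := fun x => rfl
    simp_rw [hKorb] at hconc'
    have hc2 : ∫ z, c * Sn z ∂μ = c * ((n:ℝ) * I) := by
      rw [integral_const_mul, hSnInt]
    rw [hc2] at hconc'
    have heq : ∀ x, lam * Xv x = c * Sn x - c * ((n:ℝ) * I) := by
      intro x
      simp only [hXv, hcdef]
      field_simp
    have hmgf_le : ProbabilityTheory.mgf Xv μ lam
        ≤ Real.exp (C * ∑ _j : Fin (n+k), (|c| * (2*(Lf*Mf)))^2) := by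
      have hmgfeq : ProbabilityTheory.mgf Xv μ lam = ∫ x, Real.exp (lam * Xv x) ∂μ := rfl
      rw [hmgfeq]
      calc (∫ x, Real.exp (lam * Xv x) ∂μ)
          = ∫ x, Real.exp (c * Sn x - c*((n:ℝ)*I)) ∂μ := by simp_rw [heq]
        _ ≤ _ := hconc'
    have hcabs : |c| = lam / (n:ℝ) := by
      rw [hcdef, abs_div, abs_mul, hs, abs_of_pos hlam_pos, abs_of_pos hnR, one_mul]
    have hsumL : (∑ _j : Fin (n+k), (|c| * (2*(Lf*Mf)))^2)
        = ((n:ℝ)+(k:ℝ)) * ((lam/(n:ℝ)) * (2*(Lf*Mf)))^2 := by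
      rw [hcabs, Finset.sum_const, Finset.card_univ]
      simp only [Fintype.card_fin, nsmul_eq_mul]
      push_cast
      ring
    have hexp_eq : -lam * t + C * (((n:ℝ)+(k:ℝ)) * ((lam/(n:ℝ)) * (2*(Lf*Mf)))^2)
        = -(t^2/(16*C*(Lf*Mf)^2)) * ((n:ℝ)^2/((n:ℝ)+(k:ℝ))) := by
      rw [hlamdef]
      field_simp
      ring
    calc (μ {x | t ≤ Xv x}).toReal
        ≤ Real.exp (-lam * t) * ProbabilityTheory.mgf Xv μ lam := hchern
      _ ≤ Real.exp (-lam * t)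
            * Real.exp (C * ∑ _j : Fin (n+k), (|c| * (2*(Lf*Mf)))^2) :=
          mul_le_mul_of_nonneg_left hmgf_le (Real.exp_pos _).le
      _ = Real.exp (-lam * t + C * (((n:ℝ)+(k:ℝ)) * ((lam/(n:ℝ)) * (2*(Lf*Mf)))^2)) := by
          rw [← Real.exp_add, hsumL]
      _ = _ := by rw [hexp_eq]
  have htwo : (μ {x | t < |(1/(n:ℝ)) * Sn x - I|}).toReal
      ≤ 2 * Real.exp (-(t^2/(16*C*(Lf*Mf)^2)) * ((n:ℝ)^2/((n:ℝ)+(k:ℝ)))) := by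
    have h1 := tail 1 (by norm_num)
    have h2 := tail (-1) (by norm_num)
    have hsub : {x | t < |(1/(n:ℝ)) * Sn x - I|}
        ⊆ {x | t ≤ (1:ℝ) * ((1/(n:ℝ)) * Sn x - I)}
          ∪ {x | t ≤ (-1:ℝ) * ((1/(n:ℝ)) * Sn x - I)} := by
      intro x hx
      simp only [Set.mem_setOf_eq, Set.mem_union] at hx ⊢
      rcases abs_cases ((1/(n:ℝ)) * Sn x - I) with ⟨he, _⟩ | ⟨he, _⟩
      · left; linarith
      · right; linarith
    have hle : μ {x | t < |(1/(n:ℝ)) * Sn x - I|}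
        ≤ μ {x | t ≤ (1:ℝ) * ((1/(n:ℝ)) * Sn x - I)}
          + μ {x | t ≤ (-1:ℝ) * ((1/(n:ℝ)) * Sn x - I)} :=
      (measure_mono hsub).trans (measure_union_le _ _)
    have htr : (μ {x | t < |(1/(n:ℝ)) * Sn x - I|}).toReal
        ≤ (μ {x | t ≤ (1:ℝ)*((1/(n:ℝ)) * Sn x - I)}).toReal
          + (μ {x | t ≤ (-1:ℝ)*((1/(n:ℝ)) * Sn x - I)}).toReal := by
      rw [← ENNReal.toReal_add (measure_ne_top _ _) (measure_ne_top _ _)]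
      exact ENNReal.toReal_mono
        (ENNReal.add_ne_top.mpr ⟨measure_ne_top _ _, measure_ne_top _ _⟩) hle
    linarith
  have hνnull : ν {ω | ¬ ∀ i : Fin (n+k), ‖ω i‖ ≤ 1} = 0 := by
    have hP0 : P {ξ : EuclideanSpace ℝ (Fin d) | ¬ ‖ξ‖ ≤ 1} = 0 := ae_iff.mp hP
    have hsub : {ω : Fin (n+k) → EuclideanSpace ℝ (Fin d) | ¬ ∀ i, ‖ω i‖ ≤ 1}
        ⊆ ⋃ i : Fin (n+k), Function.eval i ⁻¹' {ξ | ¬ ‖ξ‖ ≤ 1} := by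
      intro ω hω
      push_neg at hω
      obtain ⟨i, hi⟩ := hω
      exact Set.mem_iUnion.mpr ⟨i, not_le.mpr hi⟩
    refine measure_mono_null hsub (measure_iUnion_null fun i => ?_)
    exact Measure.pi_eval_preimage_null (μ := fun _ : Fin (n+k) => P) hP0
  have hprodnull : (μ.prod ν) {p : EuclideanSpace ℝ (Fin d)
      × (Fin (n+k) → EuclideanSpace ℝ (Fin d)) | ¬ ∀ i, ‖p.2 i‖ ≤ 1} = 0 := by
    have he : {p : EuclideanSpace ℝ (Fin d)
        × (Fin (n+k) → EuclideanSpace ℝ (Fin d)) | ¬ ∀ i, ‖p.2 i‖ ≤ 1}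
        = Set.univ ×ˢ {ω | ¬ ∀ i, ‖ω i‖ ≤ 1} := by
      ext p; simp
    rw [he, Measure.prod_prod, hνnull, mul_zero]
  have hprodae : ∀ᵐ p ∂(μ.prod ν), ∀ i : Fin (n+k), ‖p.2 i‖ ≤ 1 := ae_iff.mpr hprodnull
  have hincl : ∀ p : EuclideanSpace ℝ (Fin d) × (Fin (n+k) → EuclideanSpace ℝ (Fin d)),
      (∀ i : Fin (n+k), ‖p.2 i‖ ≤ 1) →
      t + 2 * (Lf * Mf) * ε <
        |(1 / (n : ℝ)) * ∑ i : Fin n, f (T^[(i : ℕ)] p.1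
                + ε • p.2 ⟨i, Nat.lt_of_lt_of_le i.isLt (Nat.le_add_right n k)⟩)
              * f (T^[(i : ℕ) + k] p.1
                + ε • p.2 ⟨(i : ℕ) + k, Nat.add_lt_add_right i.isLt k⟩)
          - I| →
      t < |(1/(n:ℝ)) * Sn p.1 - I| := by
    intro p hp2 hpS
    have hdterm : ∀ i : Fin n,
        |f (T^[(i : ℕ)] p.1
                + ε • p.2 ⟨i, Nat.lt_of_lt_of_le i.isLt (Nat.le_add_right n k)⟩)
              * f (T^[(i : ℕ) + k] p.1
                + ε • p.2 ⟨(i : ℕ) + k, Nat.add_lt_add_right i.isLt k⟩)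
          - f (T^[(i : ℕ)] p.1) * f (T^[(i : ℕ) + k] p.1)| ≤ 2*(Lf*Mf)*ε := by
      intro i
      have hd := prod_diff_bound f Lf Mf hLf hMf hfLip hfBdd
        (T^[(i : ℕ)] p.1 + ε • p.2 ⟨i, Nat.lt_of_lt_of_le i.isLt (Nat.le_add_right n k)⟩)
        (T^[(i : ℕ) + k] p.1 + ε • p.2 ⟨(i : ℕ) + k, Nat.add_lt_add_right i.isLt k⟩)
        (T^[(i : ℕ)] p.1) (T^[(i : ℕ) + k] p.1)
      have hdist : ∀ (w : EuclideanSpace ℝ (Fin d)) (j : Fin (n+k)),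
          dist (w + ε • p.2 j) w ≤ ε := by
        intro w j
        rw [dist_eq_norm, add_sub_cancel_left, norm_smul, Real.norm_eq_abs, abs_of_pos hε]
        calc ε * ‖p.2 j‖ ≤ ε * 1 := mul_le_mul_of_nonneg_left (hp2 j) hε.le
          _ = ε := mul_one ε
      have hd1 := hdist (T^[(i : ℕ)] p.1) ⟨i, Nat.lt_of_lt_of_le i.isLt (Nat.le_add_right n k)⟩
      have hd2 := hdist (T^[(i : ℕ) + k] p.1) ⟨(i : ℕ) + k, Nat.add_lt_add_right i.isLt k⟩
      have hm1 : Lf * Mf * dist (T^[(i : ℕ)] p.1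
            + ε • p.2 ⟨i, Nat.lt_of_lt_of_le i.isLt (Nat.le_add_right n k)⟩)
          (T^[(i : ℕ)] p.1) ≤ Lf * Mf * ε := mul_le_mul_of_nonneg_left hd1 hA.le
      have hm2 : Lf * Mf * dist (T^[(i : ℕ) + k] p.1
            + ε • p.2 ⟨(i : ℕ) + k, Nat.add_lt_add_right i.isLt k⟩)
          (T^[(i : ℕ) + k] p.1) ≤ Lf * Mf * ε := mul_le_mul_of_nonneg_left hd2 hA.le
      linarith
    have hdiff : |(1 / (n : ℝ)) * (∑ i : Fin n, f (T^[(i : ℕ)] p.1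
                + ε • p.2 ⟨i, Nat.lt_of_lt_of_le i.isLt (Nat.le_add_right n k)⟩)
              * f (T^[(i : ℕ) + k] p.1
                + ε • p.2 ⟨(i : ℕ) + k, Nat.add_lt_add_right i.isLt k⟩))
        - (1/(n:ℝ)) * Sn p.1| ≤ 2*(Lf*Mf)*ε := by
      rw [← mul_sub, abs_mul, abs_of_pos (by positivity : (0:ℝ) < 1/(n:ℝ)), hSndef]
      simp only []
      rw [← Finset.sum_sub_distrib]
      have hstep : |∑ i : Fin n, (f (T^[(i : ℕ)] p.1
                + ε • p.2 ⟨i, Nat.lt_of_lt_of_le i.isLt (Nat.le_add_right n k)⟩)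
              * f (T^[(i : ℕ) + k] p.1
                + ε • p.2 ⟨(i : ℕ) + k, Nat.add_lt_add_right i.isLt k⟩)
            - f (T^[(i : ℕ)] p.1) * f (T^[(i : ℕ) + k] p.1))| ≤ (n:ℝ) * (2*(Lf*Mf)*ε) := by
        calc |∑ i : Fin n, (f (T^[(i : ℕ)] p.1
                + ε • p.2 ⟨i, Nat.lt_of_lt_of_le i.isLt (Nat.le_add_right n k)⟩)
              * f (T^[(i : ℕ) + k] p.1
                + ε • p.2 ⟨(i : ℕ) + k, Nat.add_lt_add_right i.isLt k⟩)
              - f (T^[(i : ℕ)] p.1) * f (T^[(i : ℕ) + k] p.1))|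
            ≤ ∑ i : Fin n, |f (T^[(i : ℕ)] p.1
                + ε • p.2 ⟨i, Nat.lt_of_lt_of_le i.isLt (Nat.le_add_right n k)⟩)
              * f (T^[(i : ℕ) + k] p.1
                + ε • p.2 ⟨(i : ℕ) + k, Nat.add_lt_add_right i.isLt k⟩)
              - f (T^[(i : ℕ)] p.1) * f (T^[(i : ℕ) + k] p.1)| :=
              Finset.abs_sum_le_sum_abs _ _
          _ ≤ ∑ _i : Fin n, 2*(Lf*Mf)*ε := Finset.sum_le_sum fun i _ => hdterm i
          _ = (n:ℝ) * (2*(Lf*Mf)*ε) := by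
              simp [Finset.sum_const, Finset.card_univ, nsmul_eq_mul]
      calc (1/(n:ℝ)) * |∑ i : Fin n, (f (T^[(i : ℕ)] p.1
                + ε • p.2 ⟨i, Nat.lt_of_lt_of_le i.isLt (Nat.le_add_right n k)⟩)
              * f (T^[(i : ℕ) + k] p.1
                + ε • p.2 ⟨(i : ℕ) + k, Nat.add_lt_add_right i.isLt k⟩)
            - f (T^[(i : ℕ)] p.1) * f (T^[(i : ℕ) + k] p.1))|
          ≤ (1/(n:ℝ)) * ((n:ℝ) * (2*(Lf*Mf)*ε)) :=
            mul_le_mul_of_nonneg_left hstep (by positivity)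
        _ = 2*(Lf*Mf)*ε := by field_simp
    have htri := abs_sub_le ((1 / (n : ℝ)) * ∑ i : Fin n, f (T^[(i : ℕ)] p.1
                + ε • p.2 ⟨i, Nat.lt_of_lt_of_le i.isLt (Nat.le_add_right n k)⟩)
              * f (T^[(i : ℕ) + k] p.1
                + ε • p.2 ⟨(i : ℕ) + k, Nat.add_lt_add_right i.isLt k⟩))
      ((1/(n:ℝ)) * Sn p.1) I
    linarith
  have hkey : (μ.prod ν) {p : EuclideanSpace ℝ (Fin d)
        × (Fin (n+k) → EuclideanSpace ℝ (Fin d)) |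
      t + 2 * (Lf * Mf) * ε <
        |(1 / (n : ℝ)) * ∑ i : Fin n, f (T^[(i : ℕ)] p.1
                + ε • p.2 ⟨i, Nat.lt_of_lt_of_le i.isLt (Nat.le_add_right n k)⟩)
              * f (T^[(i : ℕ) + k] p.1
                + ε • p.2 ⟨(i : ℕ) + k, Nat.add_lt_add_right i.isLt k⟩)
          - I|} ≤ μ {x | t < |(1/(n:ℝ)) * Sn x - I|} := by
    have hsubae : {p : EuclideanSpace ℝ (Fin d)
          × (Fin (n+k) → EuclideanSpace ℝ (Fin d)) |
        t + 2 * (Lf * Mf) * ε <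
          |(1 / (n : ℝ)) * ∑ i : Fin n, f (T^[(i : ℕ)] p.1
                + ε • p.2 ⟨i, Nat.lt_of_lt_of_le i.isLt (Nat.le_add_right n k)⟩)
              * f (T^[(i : ℕ) + k] p.1
                + ε • p.2 ⟨(i : ℕ) + k, Nat.add_lt_add_right i.isLt k⟩)
            - I|} ≤ᵐ[μ.prod ν] Prod.fst ⁻¹' {x | t < |(1/(n:ℝ)) * Sn x - I|} := by
      filter_upwards [hprodae] with p hp2
      exact fun hpS => hincl p hp2 hpS
    calc (μ.prod ν) _ ≤ (μ.prod ν) (Prod.fst ⁻¹' {x | t < |(1/(n:ℝ)) * Sn x - I|}) :=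
          measure_mono_ae hsubae
      _ = μ {x | t < |(1/(n:ℝ)) * Sn x - I|} := by
          rw [← Set.prod_univ, Measure.prod_prod, measure_univ, mul_one]
  refine le_trans (ENNReal.toReal_mono (measure_ne_top _ _) hkey) ?_
  have h0 : 0 ≤ 2 * Real.exp (-(t ^ 2 / (64 * 1 * (Lf * Mf) ^ 2 * (1 + ε ^ 2)))
      * ((n:ℝ)^2/((n:ℝ)+(k:ℝ)))) := by positivity
  linarith
end
end

section
/- Suppose the dynamical system (X,T,μ) satisfies the polynomial concentration inequality with moment q ≥ 2 and constant C_q > 0. Let f : ℝ^d → ℝ be Lipschitz and bounded with ∫_X f dμ = 0, and set a_f = Lip(f)·‖f‖_∞. Then there exists a constant D_q > 0 such that for every ε > 0, every k ≥ 0, every n ≥ 1, and every t > 0, the observed estimator C̃ov_n(k) = (1/n) Σ_{i=0}^{n−1} f(y_i) f(y_{i+k}) satisfies μ_{n+k} ⊗ P^{n+k}(|C̃ov_n(k) − Cov(k)| > t + 2 a_f ε) ≤ (2^q D_q (1 + ε)^q + C_q) (2 a_f / t)^q ((n + k) / n²)^{q/2}. -/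
open MeasureTheory Real

noncomputable section

private lemma abs_mul_sub_le' {a b a' b' Ma Mb' x y Lx Ly : ℝ}
    (ha : |a| ≤ Ma) (hb' : |b'| ≤ Mb')
    (h1 : |b - b'| ≤ Lx) (h2 : |a - a'| ≤ Ly) (hx : Lx ≤ x) (hy : Ly ≤ y) :
    |a * b - a' * b'| ≤ Ma * x + Mb' * y := by
  have h : a * b - a' * b' = a * (b - b') + b' * (a - a') := by ring
  rw [h]
  calc |a * (b - b') + b' * (a - a')| ≤ |a * (b - b')| + |b' * (a - a')| := abs_add_le _ _
    _ = |a| * |b - b'| + |b'| * |a - a'| := by rw [abs_mul, abs_mul]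
    _ ≤ Ma * x + Mb' * y := by
        have h0 := abs_nonneg a
        have h1' := abs_nonneg b'
        have h2' := abs_nonneg (b - b')
        have h3' := abs_nonneg (a - a')
        nlinarith

private lemma integrable_of_abs_le {α : Type*} [MeasurableSpace α] {μ : Measure α}
    [IsFiniteMeasure μ] {h : α → ℝ} (hm : AEStronglyMeasurable h μ) {M : ℝ}
    (hb : ∀ x, |h x| ≤ M) : Integrable h μ :=
  Integrable.mono' (integrable_const M) hm
    (Filter.Eventually.of_forall fun x => by simpa [Real.norm_eq_abs] using hb x)

/-- The observed empirical covariance functional, as a function of the noise `ξ`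
and the `n+k` points of the orbit. -/
private def obsK {d : ℕ} (f : EuclideanSpace ℝ (Fin d) → ℝ) (ε : ℝ) (n k : ℕ)
    (ξ : Fin (n + k) → EuclideanSpace ℝ (Fin d))
    (v : Fin (n + k) → EuclideanSpace ℝ (Fin d)) : ℝ :=
  (1 / (n : ℝ)) * ∑ i : Fin n,
    f (v ⟨i, Nat.lt_of_lt_of_le i.isLt (Nat.le_add_right n k)⟩
        + ε • ξ ⟨i, Nat.lt_of_lt_of_le i.isLt (Nat.le_add_right n k)⟩)
      * f (v ⟨(i : ℕ) + k, Nat.add_lt_add_right i.isLt k⟩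
        + ε • ξ ⟨(i : ℕ) + k, Nat.add_lt_add_right i.isLt k⟩)

private lemma obsK_abs_le {d : ℕ} {f : EuclideanSpace ℝ (Fin d) → ℝ} {Mf : ℝ}
    (hMf : 0 ≤ Mf) (hfBdd : ∀ x, |f x| ≤ Mf) (ε : ℝ) {n : ℕ} (k : ℕ) (hn : 1 ≤ n)
    (ξ v : Fin (n + k) → EuclideanSpace ℝ (Fin d)) :
    |obsK f ε n k ξ v| ≤ Mf * Mf := by
  have hn0 : (0 : ℝ) < n := by exact_mod_cast hn
  rw [obsK, abs_mul, abs_of_nonneg (by positivity : (0:ℝ) ≤ 1 / (n:ℝ))]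
  calc 1 / (n:ℝ) * |∑ i : Fin n, _| ≤ 1 / (n:ℝ) * ∑ i : Fin n, (Mf * Mf) := by
        gcongr
        refine le_trans (Finset.abs_sum_le_sum_abs _ _) (Finset.sum_le_sum fun i _ => ?_)
        rw [abs_mul]
        exact mul_le_mul (hfBdd _) (hfBdd _) (abs_nonneg _) hMf
    _ = Mf * Mf := by
        rw [Finset.sum_const, Finset.card_univ, Fintype.card_fin, nsmul_eq_mul]
        field_simp

private lemma fin_emb_sum_dist {E : Type*} [PseudoMetricSpace E] {n m : ℕ}
    (v : Fin m → E) (j : Fin m) (y : E) (e : Fin n → Fin m) (he : Function.Injective e) :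
    ∑ i : Fin n, dist (v (e i)) (Function.update v j y (e i)) ≤ dist (v j) y := by
  have hdist : ∀ c : Fin m, dist (v c) (Function.update v j y c)
      = if c = j then dist (v j) y else 0 := by
    intro c
    by_cases hc : c = j
    · subst hc; simp
    · simp [Function.update_of_ne hc, hc]
  rw [Finset.sum_congr rfl fun i _ => hdist (e i)]
  by_cases hex : ∃ i, e i = j
  · obtain ⟨i₀, hi₀⟩ := hex
    have heq : ∀ i, (e i = j) = (i = i₀) := fun i =>
      propext ⟨fun h => he (h.trans hi₀.symm), fun h => h ▸ hi₀⟩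
    simp only [heq]
    rw [Finset.sum_ite_eq' Finset.univ i₀ fun _ => dist (v j) y]
    simp
  · push_neg at hex
    rw [Finset.sum_congr rfl fun i _ => if_neg (hex i)]
    simpa using dist_nonneg

private lemma dist_add_right' {d : ℕ} (a b c : EuclideanSpace ℝ (Fin d)) :
    dist (a + c) (b + c) = dist a b := by
  simp [dist_eq_norm, add_sub_add_right_eq_sub]

private lemma obsK_sepLip {d : ℕ} {f : EuclideanSpace ℝ (Fin d) → ℝ} {Lf Mf : ℝ}
    (hLf : 0 ≤ Lf) (hMf : 0 ≤ Mf)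
    (hfLip : ∀ x y, |f x - f y| ≤ Lf * dist x y)
    (hfBdd : ∀ x, |f x| ≤ Mf)
    (ε : ℝ) {n : ℕ} (k : ℕ) (hn : 1 ≤ n)
    (ξ : Fin (n + k) → EuclideanSpace ℝ (Fin d)) :
    SepLip (obsK f ε n k ξ) (fun _ => 2 * (Lf * Mf) / n) := by
  intro v j y
  have hn0 : (0 : ℝ) < n := by exact_mod_cast hn
  set v' := Function.update v j y with hv'
  set e1 : Fin n → Fin (n + k) :=
    fun i => ⟨i, Nat.lt_of_lt_of_le i.isLt (Nat.le_add_right n k)⟩ with he1def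
  set e2 : Fin n → Fin (n + k) :=
    fun i => ⟨(i : ℕ) + k, Nat.add_lt_add_right i.isLt k⟩ with he2def
  have he1 : Function.Injective e1 := by
    intro i i' h
    exact Fin.ext (by simpa [he1def] using congrArg Fin.val h)
  have he2 : Function.Injective e2 := by
    intro i i' h
    have := congrArg Fin.val h
    simp only [he2def] at this
    exact Fin.ext (Nat.add_right_cancel this)
  have key : ∀ i : Fin n,
      |f (v (e1 i) + ε • ξ (e1 i)) * f (v (e2 i) + ε • ξ (e2 i))
        - f (v' (e1 i) + ε • ξ (e1 i)) * f (v' (e2 i) + ε • ξ (e2 i))|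
      ≤ Lf * Mf * (dist (v (e1 i)) (v' (e1 i)) + dist (v (e2 i)) (v' (e2 i))) := by
    intro i
    have h1 : |f (v (e1 i) + ε • ξ (e1 i))| ≤ Mf := hfBdd _
    have h2 : |f (v' (e2 i) + ε • ξ (e2 i))| ≤ Mf := hfBdd _
    have h3 : |f (v (e2 i) + ε • ξ (e2 i)) - f (v' (e2 i) + ε • ξ (e2 i))|
        ≤ Lf * dist (v (e2 i)) (v' (e2 i)) := by
      have := hfLip (v (e2 i) + ε • ξ (e2 i)) (v' (e2 i) + ε • ξ (e2 i))
      rwa [dist_add_right'] at this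
    have h4 : |f (v (e1 i) + ε • ξ (e1 i)) - f (v' (e1 i) + ε • ξ (e1 i))|
        ≤ Lf * dist (v (e1 i)) (v' (e1 i)) := by
      have := hfLip (v (e1 i) + ε • ξ (e1 i)) (v' (e1 i) + ε • ξ (e1 i))
      rwa [dist_add_right'] at this
    have := abs_mul_sub_le' h1 h2 h3 h4 (le_refl _) (le_refl _)
    calc |_| ≤ Mf * (Lf * dist (v (e2 i)) (v' (e2 i)))
          + Mf * (Lf * dist (v (e1 i)) (v' (e1 i))) := this
      _ = Lf * Mf * (dist (v (e1 i)) (v' (e1 i)) + dist (v (e2 i)) (v' (e2 i))) := by ring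
  have hdiff : obsK f ε n k ξ v - obsK f ε n k ξ v'
      = (1 / (n : ℝ)) * ∑ i : Fin n,
        (f (v (e1 i) + ε • ξ (e1 i)) * f (v (e2 i) + ε • ξ (e2 i))
          - f (v' (e1 i) + ε • ξ (e1 i)) * f (v' (e2 i) + ε • ξ (e2 i))) := by
    rw [obsK, obsK, ← mul_sub, ← Finset.sum_sub_distrib]
  calc |obsK f ε n k ξ v - obsK f ε n k ξ v'|
      = (1 / (n : ℝ)) * |∑ i : Fin n,
        (f (v (e1 i) + ε • ξ (e1 i)) * f (v (e2 i) + ε • ξ (e2 i))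
          - f (v' (e1 i) + ε • ξ (e1 i)) * f (v' (e2 i) + ε • ξ (e2 i)))| := by
        rw [hdiff, abs_mul, abs_of_nonneg (by positivity : (0:ℝ) ≤ 1 / (n:ℝ))]
    _ ≤ (1 / (n : ℝ)) * ∑ i : Fin n,
        (Lf * Mf * (dist (v (e1 i)) (v' (e1 i)) + dist (v (e2 i)) (v' (e2 i)))) := by
        gcongr
        exact le_trans (Finset.abs_sum_le_sum_abs _ _) (Finset.sum_le_sum fun i _ => key i)
    _ = (1 / (n : ℝ)) * (Lf * Mf) * ((∑ i : Fin n, dist (v (e1 i)) (v' (e1 i)))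
        + ∑ i : Fin n, dist (v (e2 i)) (v' (e2 i))) := by
        rw [← Finset.mul_sum, ← Finset.sum_add_distrib]
        ring
    _ ≤ (1 / (n : ℝ)) * (Lf * Mf) * (dist (v j) y + dist (v j) y) := by
        have hs1 := fin_emb_sum_dist v j y e1 he1
        have hs2 := fin_emb_sum_dist v j y e2 he2
        have h0 : (0:ℝ) ≤ (1 / (n : ℝ)) * (Lf * Mf) := by positivity
        exact mul_le_mul_of_nonneg_left (by rw [← hv'] at hs1 hs2; linarith) h0
    _ = 2 * (Lf * Mf) / (n : ℝ) * dist (v j) y := by ring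

private lemma obsK_measurable {d : ℕ} {f : EuclideanSpace ℝ (Fin d) → ℝ}
    (hf : Measurable f) (ε : ℝ) (n k : ℕ) :
    Measurable (fun p : (Fin (n + k) → EuclideanSpace ℝ (Fin d))
        × (Fin (n + k) → EuclideanSpace ℝ (Fin d)) => obsK f ε n k p.1 p.2) := by
  unfold obsK
  refine (Finset.measurable_sum _ fun i _ => ?_).const_mul _
  have m1 : ∀ c : Fin (n + k), Measurable
      (fun p : (Fin (n + k) → EuclideanSpace ℝ (Fin d))
        × (Fin (n + k) → EuclideanSpace ℝ (Fin d)) => p.2 c + ε • p.1 c) := fun c =>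
    ((measurable_pi_apply c).comp measurable_snd).add
      (((measurable_pi_apply c).comp measurable_fst).const_smul ε)
  exact (hf.comp (m1 _)).mul (hf.comp (m1 _))

private lemma map_iterate_eq {d : ℕ} {T : EuclideanSpace ℝ (Fin d) → EuclideanSpace ℝ (Fin d)}
    (hT : Measurable T) {μ : Measure (EuclideanSpace ℝ (Fin d))}
    (hinv : μ.map T = μ) : ∀ m : ℕ, μ.map (T^[m]) = μ := by
  intro m
  induction m with
  | zero => simp [Measure.map_id]
  | succ m ih =>
    rw [Function.iterate_succ, ← Measure.map_map (hT.iterate m) hT, hinv, ih]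

/-- Deterministic bias bound for the observed covariance functional. -/
private lemma obsK_bias {d : ℕ} {T : EuclideanSpace ℝ (Fin d) → EuclideanSpace ℝ (Fin d)}
    (hT : Measurable T) {μ : Measure (EuclideanSpace ℝ (Fin d))} [IsProbabilityMeasure μ]
    (hinv : μ.map T = μ) {f : EuclideanSpace ℝ (Fin d) → ℝ} (hf : Measurable f)
    {Lf Mf : ℝ} (hLf : 0 ≤ Lf) (hMf : 0 ≤ Mf)
    (hfLip : ∀ x y, |f x - f y| ≤ Lf * dist x y)
    (hfBdd : ∀ x, |f x| ≤ Mf)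
    {ε : ℝ} (hε : 0 ≤ ε) {n : ℕ} (k : ℕ) (hn : 1 ≤ n)
    (ξ : Fin (n + k) → EuclideanSpace ℝ (Fin d)) (hξ : ∀ i, ‖ξ i‖ ≤ 1) :
    |(∫ z, obsK f ε n k ξ (fun i => T^[(i : ℕ)] z) ∂μ) - ∫ z, f z * f (T^[k] z) ∂μ|
      ≤ 2 * (Lf * Mf) * ε := by
  have hn0 : (0 : ℝ) < n := by exact_mod_cast hn
  set φ : EuclideanSpace ℝ (Fin d) → ℝ := fun z => f z * f (T^[k] z) with hφdef
  have hφm : Measurable φ := hf.mul (hf.comp (hT.iterate k))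
  have hφb : ∀ z, |φ z| ≤ Mf * Mf := fun z => by
    rw [hφdef, abs_mul]
    exact mul_le_mul (hfBdd _) (hfBdd _) (abs_nonneg _) hMf
  set c1 : Fin n → Fin (n + k) :=
    fun i => ⟨i, Nat.lt_of_lt_of_le i.isLt (Nat.le_add_right n k)⟩ with hc1
  set c2 : Fin n → Fin (n + k) :=
    fun i => ⟨(i : ℕ) + k, Nat.add_lt_add_right i.isLt k⟩ with hc2
  set G : Fin n → EuclideanSpace ℝ (Fin d) → ℝ := fun i z =>
    f (T^[(i : ℕ)] z + ε • ξ (c1 i)) * f (T^[(i : ℕ) + k] z + ε • ξ (c2 i)) with hGdef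
  have hGm : ∀ i, Measurable (G i) := fun i =>
    (hf.comp ((hT.iterate _).add_const _)).mul (hf.comp ((hT.iterate _).add_const _))
  have hGb : ∀ i z, |G i z| ≤ Mf * Mf := fun i z => by
    rw [hGdef, abs_mul]
    exact mul_le_mul (hfBdd _) (hfBdd _) (abs_nonneg _) hMf
  have hGint : ∀ i, Integrable (G i) μ := fun i =>
    integrable_of_abs_le (hGm i).aestronglyMeasurable (hGb i)
  have hφTm : ∀ i : Fin n, Measurable fun z => φ (T^[(i : ℕ)] z) := fun i =>
    hφm.comp (hT.iterate _)
  have hφTint : ∀ i : Fin n, Integrable (fun z => φ (T^[(i : ℕ)] z)) μ := fun i =>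
    integrable_of_abs_le (hφTm i).aestronglyMeasurable (fun z => hφb _)
  -- invariance
  have hinvint : ∀ i : Fin n, ∫ z, φ (T^[(i : ℕ)] z) ∂μ = ∫ z, φ z ∂μ := by
    intro i
    conv_rhs => rw [← map_iterate_eq hT hinv (i : ℕ)]
    exact (integral_map (hT.iterate _).aemeasurable
      (by rw [map_iterate_eq hT hinv]; exact hφm.aestronglyMeasurable)).symm
  -- expand the integral of obsK
  have hIexp : ∫ z, obsK f ε n k ξ (fun i => T^[(i : ℕ)] z) ∂μ
      = (1 / (n : ℝ)) * ∑ i : Fin n, ∫ z, G i z ∂μ := by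
    have : (fun z => obsK f ε n k ξ (fun i => T^[(i : ℕ)] z))
        = fun z => (1 / (n : ℝ)) * ∑ i : Fin n, G i z := rfl
    rw [this, integral_const_mul, integral_finset_sum _ fun i _ => hGint i]
  have hCov : ∫ z, φ z ∂μ = (1 / (n : ℝ)) * ∑ i : Fin n, ∫ z, φ (T^[(i : ℕ)] z) ∂μ := by
    rw [Finset.sum_congr rfl fun i _ => hinvint i, Finset.sum_const, Finset.card_univ,
      Fintype.card_fin, nsmul_eq_mul]
    field_simp
  -- pointwise comparison
  have hpt : ∀ (i : Fin n) z, |G i z - φ (T^[(i : ℕ)] z)| ≤ 2 * (Lf * Mf) * ε := by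
    intro i z
    have hTk : φ (T^[(i : ℕ)] z) = f (T^[(i : ℕ)] z) * f (T^[(i : ℕ) + k] z) := by
      rw [hφdef]
      congr 2
      rw [add_comm, Function.iterate_add_apply]
    rw [hTk, hGdef]
    have hd1 : dist (T^[(i : ℕ)] z + ε • ξ (c1 i)) (T^[(i : ℕ)] z) ≤ ε := by
      rw [dist_eq_norm, add_sub_cancel_left, norm_smul, Real.norm_eq_abs, abs_of_nonneg hε]
      calc ε * ‖ξ (c1 i)‖ ≤ ε * 1 := by gcongr; exact hξ _
        _ = ε := mul_one ε
    have hd2 : dist (T^[(i : ℕ) + k] z + ε • ξ (c2 i)) (T^[(i : ℕ) + k] z) ≤ ε := by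
      rw [dist_eq_norm, add_sub_cancel_left, norm_smul, Real.norm_eq_abs, abs_of_nonneg hε]
      calc ε * ‖ξ (c2 i)‖ ≤ ε * 1 := by gcongr; exact hξ _
        _ = ε := mul_one ε
    have h3 : |f (T^[(i : ℕ) + k] z + ε • ξ (c2 i)) - f (T^[(i : ℕ) + k] z)| ≤ Lf * ε :=
      le_trans (hfLip _ _) (by have := hd2; nlinarith [dist_nonneg (x := T^[(i : ℕ) + k] z + ε • ξ (c2 i)) (y := T^[(i : ℕ) + k] z)])
    have h4 : |f (T^[(i : ℕ)] z + ε • ξ (c1 i)) - f (T^[(i : ℕ)] z)| ≤ Lf * ε :=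
      le_trans (hfLip _ _) (by have := hd1; nlinarith [dist_nonneg (x := T^[(i : ℕ)] z + ε • ξ (c1 i)) (y := T^[(i : ℕ)] z)])
    have := abs_mul_sub_le' (hfBdd (T^[(i : ℕ)] z + ε • ξ (c1 i)))
      (hfBdd (T^[(i : ℕ) + k] z)) h3 h4 (le_refl _) (le_refl _)
    calc |_| ≤ Mf * (Lf * ε) + Mf * (Lf * ε) := this
      _ = 2 * (Lf * Mf) * ε := by ring
  -- integral comparison
  have hterm : ∀ i : Fin n, |(∫ z, G i z ∂μ) - ∫ z, φ (T^[(i : ℕ)] z) ∂μ|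
      ≤ 2 * (Lf * Mf) * ε := by
    intro i
    rw [← integral_sub (hGint i) (hφTint i)]
    calc |∫ z, (G i z - φ (T^[(i : ℕ)] z)) ∂μ| ≤ ∫ z, |G i z - φ (T^[(i : ℕ)] z)| ∂μ := by
          simpa [Real.norm_eq_abs] using
            norm_integral_le_integral_norm (μ := μ) (fun z => G i z - φ (T^[(i : ℕ)] z))
      _ ≤ ∫ _, (2 * (Lf * Mf) * ε) ∂μ := by
          refine integral_mono ((hGint i).sub (hφTint i)).abs (integrable_const _) ?_
          intro z; exact hpt i z
      _ = 2 * (Lf * Mf) * ε := by simp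
  calc |(∫ z, obsK f ε n k ξ (fun i => T^[(i : ℕ)] z) ∂μ) - ∫ z, φ z ∂μ|
      = |(1 / (n : ℝ)) * ∑ i : Fin n,
          ((∫ z, G i z ∂μ) - ∫ z, φ (T^[(i : ℕ)] z) ∂μ)| := by
        rw [hIexp, hCov, ← mul_sub, ← Finset.sum_sub_distrib]
    _ ≤ (1 / (n : ℝ)) * ∑ i : Fin n, (2 * (Lf * Mf) * ε) := by
        rw [abs_mul, abs_of_nonneg (by positivity : (0:ℝ) ≤ 1 / (n:ℝ))]
        gcongr
        exact le_trans (Finset.abs_sum_le_sum_abs _ _) (Finset.sum_le_sum fun i _ => hterm i)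
    _ = 2 * (Lf * Mf) * ε := by
        rw [Finset.sum_const, Finset.card_univ, Fintype.card_fin, nsmul_eq_mul]
        field_simp

set_option maxHeartbeats 2000000 in
/-- Deviation bound for the observed empirical estimator of the auto-covariance
function `C̃ov_n(k) = (1/n) ∑ f(y_i) f(y_{i+k})`, `y_i = T^i x + ε ξ_i`, of a bounded
Lipschitz observable `f` (Lipschitz constant `Lf`, bound `Mf`, `a_f = Lf Mf`), for a
system satisfying the polynomial concentration inequality with moment `q ≥ 2`. -/
theorem observed_autocovariance_deviation_polynomial {d : ℕ}
    (X : Set (EuclideanSpace ℝ (Fin d))) (hX : IsCompact X)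
    (T : EuclideanSpace ℝ (Fin d) → EuclideanSpace ℝ (Fin d))
    (hT : Measurable T) (hTX : Set.MapsTo T X X)
    (μ : Measure (EuclideanSpace ℝ (Fin d))) [IsProbabilityMeasure μ]
    (hμX : μ X = 1) (hinv : μ.map T = μ)
    (q : ℝ) (hq : 2 ≤ q) (Cq : ℝ) (hCq : 0 < Cq)
    (hconc : ∀ (n : ℕ), 1 ≤ n → ∀ (K : (Fin n → EuclideanSpace ℝ (Fin d)) → ℝ)
      (L : Fin n → ℝ), SepLip K L →
      ∫ x, |K (fun i => T^[(i : ℕ)] x)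
          - ∫ z, K (fun i => T^[(i : ℕ)] z) ∂μ| ^ q ∂μ
        ≤ Cq * (∑ j, L j ^ 2) ^ (q / 2))
    (P : Measure (EuclideanSpace ℝ (Fin d))) [IsProbabilityMeasure P]
    (hP : ∀ᵐ ξ ∂P, ‖ξ‖ ≤ 1)
    (f : EuclideanSpace ℝ (Fin d) → ℝ) (hf : Measurable f)
    (Lf Mf : ℝ) (hLf : 0 ≤ Lf) (hMf : 0 ≤ Mf)
    (hfLip : ∀ x y, |f x - f y| ≤ Lf * dist x y)
    (hfBdd : ∀ x, |f x| ≤ Mf)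
    (hf0 : ∫ x, f x ∂μ = 0) :
    ∃ Dq : ℝ, 0 < Dq ∧ ∀ ε : ℝ, 0 < ε → ∀ (k : ℕ) (n : ℕ), 1 ≤ n → ∀ t : ℝ, 0 < t →
      ((μ.prod (Measure.pi fun _ : Fin (n + k) => P))
          {p | t + 2 * (Lf * Mf) * ε <
            |(1 / (n : ℝ)) * ∑ i : Fin n,
                f (T^[(i : ℕ)] p.1
                    + ε • p.2 ⟨i, Nat.lt_of_lt_of_le i.isLt (Nat.le_add_right n k)⟩)
                  * f (T^[(i : ℕ) + k] p.1
                    + ε • p.2 ⟨(i : ℕ) + k, Nat.add_lt_add_right i.isLt k⟩)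
              - ∫ z, f z * f (T^[k] z) ∂μ|}).toReal
        ≤ ((2 : ℝ) ^ q * Dq * (1 + ε) ^ q + Cq) * (2 * (Lf * Mf) / t) ^ q
            * (((n : ℝ) + (k : ℝ)) / (n : ℝ) ^ 2) ^ (q / 2) := by
  have hq0 : (0 : ℝ) < q := by linarith
  refine ⟨1, one_pos, ?_⟩
  intro ε hε k n hn t ht
  have hn0 : (0 : ℝ) < n := by exact_mod_cast hn
  have ha0 : (0 : ℝ) ≤ Lf * Mf := mul_nonneg hLf hMf
  set Pn : Measure (Fin (n + k) → EuclideanSpace ℝ (Fin d)) :=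
    Measure.pi fun _ => P with hPn
  set ν := μ.prod Pn with hν
  set Cov := ∫ z, f z * f (T^[k] z) ∂μ with hCov
  set Iξ : (Fin (n + k) → EuclideanSpace ℝ (Fin d)) → ℝ :=
    fun ξ => ∫ z, obsK f ε n k ξ (fun i => T^[(i : ℕ)] z) ∂μ with hIξ
  set g : EuclideanSpace ℝ (Fin d) × (Fin (n + k) → EuclideanSpace ℝ (Fin d)) → ℝ :=
    fun p => obsK f ε n k p.2 (fun i => T^[(i : ℕ)] p.1) - Iξ p.2 with hgdef
  -- measurability
  have horbm : Measurable fun x : EuclideanSpace ℝ (Fin d) =>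
      (fun i : Fin (n + k) => T^[(i : ℕ)] x) :=
    measurable_pi_lambda _ fun i => hT.iterate _
  have hKm := obsK_measurable hf ε n k
  have hSm : Measurable fun p : EuclideanSpace ℝ (Fin d)
      × (Fin (n + k) → EuclideanSpace ℝ (Fin d)) =>
      obsK f ε n k p.2 (fun i => T^[(i : ℕ)] p.1) :=
    hKm.comp (measurable_snd.prodMk (horbm.comp measurable_fst))
  have hIm : StronglyMeasurable Iξ := by
    have hW : Measurable fun w : (Fin (n + k) → EuclideanSpace ℝ (Fin d))
        × EuclideanSpace ℝ (Fin d) => obsK f ε n k w.1 (fun i => T^[(i : ℕ)] w.2) :=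
      hKm.comp (measurable_fst.prodMk (horbm.comp measurable_snd))
    exact hW.stronglyMeasurable.integral_prod_right'
  have hgm : Measurable g := hSm.sub (hIm.measurable.comp measurable_snd)
  -- bounds
  have hKb : ∀ ξ v, |obsK f ε n k ξ v| ≤ Mf * Mf :=
    fun ξ v => obsK_abs_le hMf hfBdd ε k hn ξ v
  have hIb : ∀ ξ, |Iξ ξ| ≤ Mf * Mf := by
    intro ξ
    have := norm_integral_le_of_norm_le_const (μ := μ)
      (C := Mf * Mf) (f := fun z => obsK f ε n k ξ (fun i => T^[(i : ℕ)] z))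
      (Filter.Eventually.of_forall fun z => by
        simpa [Real.norm_eq_abs] using hKb ξ _)
    simpa [Real.norm_eq_abs, measure_univ] using this
  have hgb : ∀ p, |g p| ≤ Mf * Mf + Mf * Mf := by
    intro p
    rw [hgdef]
    exact le_trans (abs_sub _ _) (add_le_add (hKb _ _) (hIb _))
  -- integrability of |g|^q
  have hhm : Measurable fun p => |g p| ^ q :=
    (Real.continuous_rpow_const hq0.le).measurable.comp hgm.abs
  have hhnn : ∀ p, 0 ≤ |g p| ^ q := fun p => Real.rpow_nonneg (abs_nonneg _) q
  have hhint : Integrable (fun p => |g p| ^ q) ν := by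
    refine integrable_of_abs_le hhm.aestronglyMeasurable
      (M := (Mf * Mf + Mf * Mf) ^ q) fun p => ?_
    rw [abs_of_nonneg (hhnn p)]
    exact Real.rpow_le_rpow (abs_nonneg _) (hgb p) hq0.le
  -- concentration applied for each fixed noise
  set B := Cq * (((n + k : ℕ) : ℝ) * (2 * (Lf * Mf) / (n : ℝ)) ^ 2) ^ (q / 2) with hB
  have hconc' : ∀ ξ, ∫ x, |g (x, ξ)| ^ q ∂μ ≤ B := by
    intro ξ
    have hsl := obsK_sepLip hLf hMf hfLip hfBdd ε k hn ξ
    have h := hconc (n + k) (le_trans hn (Nat.le_add_right n k)) (obsK f ε n k ξ)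
      (fun _ => 2 * (Lf * Mf) / (n : ℝ)) hsl
    rw [Finset.sum_const, Finset.card_univ, Fintype.card_fin, nsmul_eq_mul] at h
    exact h
  -- Fubini
  have hfub : ∫ p, |g p| ^ q ∂ν ≤ B := by
    rw [hν, integral_prod _ hhint]
    have hswap : ∫ x, ∫ ξ, |g (x, ξ)| ^ q ∂Pn ∂μ = ∫ ξ, ∫ x, |g (x, ξ)| ^ q ∂μ ∂Pn :=
      integral_integral_swap (f := fun x ξ => |g (x, ξ)| ^ q) (by exact hhint)
    rw [hswap]
    calc ∫ ξ, ∫ x, |g (x, ξ)| ^ q ∂μ ∂Pn ≤ ∫ _, B ∂Pn := by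
          refine integral_mono_of_nonneg
            (Filter.Eventually.of_forall fun ξ => integral_nonneg fun x => hhnn _)
            (integrable_const B) (Filter.Eventually.of_forall fun ξ => hconc' ξ)
      _ = B := by simp
  -- a.e. bounded noise
  have hae : ∀ᵐ p ∂ν, ∀ i, ‖p.2 i‖ ≤ 1 := by
    have h1 : ∀ᵐ ξ ∂Pn, ∀ i, ‖ξ i‖ ≤ 1 :=
      ae_all_iff.2 fun i =>
        (Measure.tendsto_eval_ae_ae (μ := fun _ : Fin (n + k) => P) (i := i)).eventually hP
    have h2 : ν.map Prod.snd = Pn := by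
      rw [hν, Measure.map_snd_prod]; simp
    exact ae_of_ae_map measurable_snd.aemeasurable (h2 ▸ h1)
  -- the event is a.e. included in the Markov event
  have hsub : {p : EuclideanSpace ℝ (Fin d) × (Fin (n + k) → EuclideanSpace ℝ (Fin d)) |
        t + 2 * (Lf * Mf) * ε < |obsK f ε n k p.2 (fun i => T^[(i : ℕ)] p.1) - Cov|}
      ≤ᵐ[ν] {p | t ^ q ≤ |g p| ^ q} := by
    filter_upwards [hae] with p hp hpA
    have hbias : |Iξ p.2 - Cov| ≤ 2 * (Lf * Mf) * ε :=
      obsK_bias hT hinv hf hLf hMf hfLip hfBdd hε.le k hn p.2 hp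
    have htri : |obsK f ε n k p.2 (fun i => T^[(i : ℕ)] p.1) - Cov|
        ≤ |g p| + |Iξ p.2 - Cov| := by
      have : obsK f ε n k p.2 (fun i => T^[(i : ℕ)] p.1) - Cov
          = g p + (Iξ p.2 - Cov) := by rw [hgdef]; ring
      rw [this]
      exact abs_add_le _ _
    have hpA' : t + 2 * (Lf * Mf) * ε
        < |obsK f ε n k p.2 (fun i => T^[(i : ℕ)] p.1) - Cov| := hpA
    have hlt : t < |g p| := by linarith
    exact Real.rpow_le_rpow ht.le hlt.le hq0.le
  -- Markov inequality
  have hmark := mul_meas_ge_le_integral_of_nonneg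
    (μ := ν) (f := fun p => |g p| ^ q)
    (Filter.Eventually.of_forall hhnn) hhint (t ^ q)
  have htq : (0 : ℝ) < t ^ q := Real.rpow_pos_of_pos ht q
  have hmeas_le : (ν {p | t ^ q ≤ |g p| ^ q}).toReal ≤ B / t ^ q := by
    rw [le_div_iff₀ htq]
    calc (ν {p | t ^ q ≤ |g p| ^ q}).toReal * t ^ q
        = t ^ q * (ν {p | t ^ q ≤ |g p| ^ q}).toReal := mul_comm _ _
      _ ≤ ∫ p, |g p| ^ q ∂ν := hmark
      _ ≤ B := hfub
  -- assemble
  have hmain : ((μ.prod (Measure.pi fun _ : Fin (n + k) => P))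
      {p | t + 2 * (Lf * Mf) * ε <
        |(1 / (n : ℝ)) * ∑ i : Fin n,
            f (T^[(i : ℕ)] p.1
                + ε • p.2 ⟨i, Nat.lt_of_lt_of_le i.isLt (Nat.le_add_right n k)⟩)
              * f (T^[(i : ℕ) + k] p.1
                + ε • p.2 ⟨(i : ℕ) + k, Nat.add_lt_add_right i.isLt k⟩)
          - Cov|}).toReal ≤ B / t ^ q := by
    refine le_trans ?_ hmeas_le
    refine ENNReal.toReal_mono (measure_ne_top ν _) ?_
    exact measure_mono_ae hsub
  refine le_trans hmain ?_
  -- final algebra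
  have hcast : ((n + k : ℕ) : ℝ) = (n : ℝ) + (k : ℝ) := by push_cast; ring
  have hc0 : (0 : ℝ) ≤ ((n : ℝ) + (k : ℝ)) / (n : ℝ) ^ 2 := by positivity
  have hinner : ((n : ℝ) + (k : ℝ)) * (2 * (Lf * Mf) / (n : ℝ)) ^ (2:ℕ)
      = (2 * (Lf * Mf)) ^ (2:ℕ) * (((n : ℝ) + (k : ℝ)) / (n : ℝ) ^ 2) := by
    field_simp
  have hsq : (((2 * (Lf * Mf)) ^ (2:ℕ) : ℝ)) ^ (q / 2) = (2 * (Lf * Mf)) ^ q := by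
    rw [← Real.rpow_natCast (2 * (Lf * Mf)) 2, ← Real.rpow_mul (by positivity)]
    norm_num
    congr 1
    ring
  have hBeq : B = Cq * ((2 * (Lf * Mf)) ^ q
      * (((n : ℝ) + (k : ℝ)) / (n : ℝ) ^ 2) ^ (q / 2)) := by
    rw [hB, hcast, hinner, Real.mul_rpow (by positivity) hc0, hsq]
  have hdiv : B / t ^ q = Cq * (2 * (Lf * Mf) / t) ^ q
      * (((n : ℝ) + (k : ℝ)) / (n : ℝ) ^ 2) ^ (q / 2) := by
    rw [hBeq, Real.div_rpow (by positivity) ht.le]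
    field_simp
  rw [hdiv]
  have h2q : (0 : ℝ) ≤ (2 : ℝ) ^ q * 1 * (1 + ε) ^ q := by
    have := Real.rpow_nonneg (by norm_num : (0:ℝ) ≤ 2) q
    have := Real.rpow_nonneg (by linarith : (0:ℝ) ≤ 1 + ε) q
    nlinarith
  have hfac1 : (0 : ℝ) ≤ (2 * (Lf * Mf) / t) ^ q := Real.rpow_nonneg (by positivity) q
  have hfac2 : (0 : ℝ) ≤ (((n : ℝ) + (k : ℝ)) / (n : ℝ) ^ 2) ^ (q / 2) :=
    Real.rpow_nonneg hc0 (q / 2)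
  calc Cq * (2 * (Lf * Mf) / t) ^ q * (((n : ℝ) + (k : ℝ)) / (n : ℝ) ^ 2) ^ (q / 2)
      ≤ ((2 : ℝ) ^ q * 1 * (1 + ε) ^ q + Cq) * (2 * (Lf * Mf) / t) ^ q
        * (((n : ℝ) + (k : ℝ)) / (n : ℝ) ^ 2) ^ (q / 2) := by
        refine mul_le_mul_of_nonneg_right (mul_le_mul_of_nonneg_right ?_ hfac1) hfac2
        linarith
    _ = _ := rfl
end
end

section
/- Suppose the dynamical system (X,T,μ) satisfies the exponential concentration inequality with constant C > 0. Then there exists a constant D > 0 such that for every ε > 0, every n ≥ 1, and every t > 0, the observed empirical measure Ẽ_n = (1/n) Σ_{i=0}^{n−1} δ_{y_i} satisfies μ_n ⊗ P^n(κ(Ẽ_n, μ) > t + E_{μ_n ⊗ P^n}[κ(Ẽ_n, μ)]) ≤ exp(−t² n / (4 D (1 + ε²))). -/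
open MeasureTheory Real

noncomputable section

/-- The Kantorovich distance between two measures:
`κ(ν₁, ν₂) = sup { ∫ g dν₁ - ∫ g dν₂ : g Lipschitz with constant at most 1 }`. -/
def kantorovich {α : Type*} [MeasurableSpace α] [PseudoMetricSpace α]
    (ν₁ ν₂ : Measure α) : ℝ :=
  ⨆ g : {g : α → ℝ // LipschitzWith 1 g}, (∫ x, g.1 x ∂ν₁ - ∫ x, g.1 x ∂ν₂)

/-- The observed empirical measure `Ẽ_n = (1/n) ∑_{i<n} δ_{y_i}`,
where `y_i = T^i x + ε ξ_i`. -/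
def obsEmpirical {d n : ℕ} (T : EuclideanSpace ℝ (Fin d) → EuclideanSpace ℝ (Fin d))
    (ε : ℝ) (p : EuclideanSpace ℝ (Fin d) × (Fin n → EuclideanSpace ℝ (Fin d))) :
    Measure (EuclideanSpace ℝ (Fin d)) :=
  (n : ENNReal)⁻¹ • ∑ i : Fin n, Measure.dirac (T^[(i : ℕ)] p.1 + ε • p.2 i)

/-!
The Kantorovich distance `Φ w = κ(Ẽ(w), μ)` from the empirical measure of `w : Fin n → ℝ^d` is
separately `1/n`-Lipschitz. Split the deviation `Φ(orbit x + ε ξ) - 𝔼 Φ` into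
`Φ(orbit x + ε ξ) - 𝔼ₓ Φ` and `𝔼ₓ Φ - 𝔼 Φ`. For each fixed noise `ξ`, the first part is
sub-Gaussian with variance proxy `2C/n` by the concentration inequality of the orbit. The second
is a separately `ε/n`-Lipschitz function of independent noise supported in the unit ball, hence
has bounded differences `2ε/n` and is sub-Gaussian with proxy `4ε²/n` by McDiarmid's argument
(Hoeffding's lemma one coordinate at a time). Variance proxies add along the product measure, and
the Chernoff bound for the proxy `2D(1 + ε²)/n`, `D = max C 2`, is the claim.
-/

open ProbabilityTheory Function
open scoped NNReal

section BoundedDifferences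

variable {α : Type*} {n : ℕ}

def HasBoundedDifferences (K : (Fin n → α) → ℝ) (δ : Fin n → α → α → ℝ) : Prop :=
  ∀ x j a, |K x - K (update x j a)| ≤ δ j (x j) a

theorem HasBoundedDifferences.abs_sub_le_sum {K : (Fin n → α) → ℝ} {δ : Fin n → α → α → ℝ}
    (hK : HasBoundedDifferences K δ) (x y : Fin n → α) :
    |K x - K y| ≤ ∑ j, δ j (x j) (y j) := by
  classical
  suffices ∀ s : Finset (Fin n), |K x - K (s.piecewise y x)| ≤ ∑ j ∈ s, δ j (x j) (y j) by
    simpa using this Finset.univ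
  intro s
  induction s using Finset.induction_on with
  | empty => simp
  | insert j s hj ih =>
    have hstep := hK (s.piecewise y x) j (y j)
    rw [Finset.piecewise_eq_of_notMem _ _ _ hj] at hstep
    rw [Finset.piecewise_insert, Finset.sum_insert hj]
    linarith [abs_sub_le (K x) (K (s.piecewise y x)) (K (update (s.piecewise y x) j (y j)))]

theorem HasBoundedDifferences.integral {Ω : Type*} [MeasurableSpace Ω] {μ : Measure Ω}
    [IsProbabilityMeasure μ] {K : Ω → (Fin n → α) → ℝ} {δ : Fin n → α → α → ℝ}
    (hK : ∀ ω, HasBoundedDifferences (K ω) δ) (hint : ∀ x, Integrable (fun ω ↦ K ω x) μ) :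
    HasBoundedDifferences (fun x ↦ ∫ ω, K ω x ∂μ) δ := by
  intro x j a
  rw [← integral_sub (hint x) (hint _)]
  simpa using norm_integral_le_of_norm_le_const (μ := μ)
    (Filter.Eventually.of_forall fun ω ↦ (Real.norm_eq_abs _).trans_le (hK ω x j a))

end BoundedDifferences

section SepLip

variable {E : Type*} {n : ℕ}

theorem SepLip.hasBoundedDifferences [PseudoMetricSpace E] {K : (Fin n → E) → ℝ}
    {L : Fin n → ℝ} (hK : SepLip K L) :
    HasBoundedDifferences K fun j a b ↦ L j * dist a b :=
  hK

theorem SepLip.dist_le [PseudoMetricSpace E] {K : (Fin n → E) → ℝ} {ℓ : ℝ}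
    (hK : SepLip K fun _ ↦ ℓ) (hℓ : 0 ≤ ℓ) (x y : Fin n → E) :
    dist (K x) (K y) ≤ n * ℓ * dist x y := by
  rw [Real.dist_eq]
  calc |K x - K y| ≤ ∑ j, ℓ * dist (x j) (y j) := hK.hasBoundedDifferences.abs_sub_le_sum x y
    _ ≤ ∑ _j : Fin n, ℓ * dist x y := by gcongr; exact dist_le_pi_dist x y _
    _ = n * ℓ * dist x y := by simp [mul_assoc]

theorem SepLip.continuous [PseudoMetricSpace E] {K : (Fin n → E) → ℝ} {ℓ : ℝ}
    (hK : SepLip K fun _ ↦ ℓ) (hℓ : 0 ≤ ℓ) : Continuous K :=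
  (LipschitzWith.of_dist_le_mul (K := (n * ℓ).toNNReal) fun x y ↦ by
    simpa [Real.coe_toNNReal _ (by positivity : (0 : ℝ) ≤ n * ℓ)] using
      hK.dist_le hℓ x y).continuous

theorem SepLip.comp_add_smul_s10 [SeminormedAddCommGroup E] [NormedSpace ℝ E]
    {K : (Fin n → E) → ℝ} {L : Fin n → ℝ} (hK : SepLip K L) (v : Fin n → E) (a : ℝ) :
    SepLip (fun z ↦ K (v + a • z)) fun j ↦ L j * |a| := by
  intro z j y
  have hupd : v + a • update z j y = update (v + a • z) j (v j + a • y) := by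
    ext1 i
    rcases eq_or_ne i j with rfl | hij <;> simp [update_of_ne, *]
  simp only [hupd]
  refine (hK _ j _).trans_eq ?_
  simp only [Pi.add_apply, Pi.smul_apply, dist_add_left, dist_smul₀, Real.norm_eq_abs]
  ring

end SepLip

section Kantorovich

variable {E : Type*} [NormedAddCommGroup E] [MeasurableSpace E] [BorelSpace E]

theorem LipschitzWith.integrable_of_integrable_norm {μ : Measure E} [IsFiniteMeasure μ]
    {g : E → ℝ} {K : ℝ≥0} (hg : LipschitzWith K g) (hμ : Integrable (‖·‖) μ) :
    Integrable g μ := by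
  refine ((integrable_const |g 0|).add (hμ.const_mul K)).mono' hg.continuous.aestronglyMeasurable
    (Filter.Eventually.of_forall fun x ↦ ?_)
  have := hg.dist_le_mul x 0
  rw [Real.dist_eq, dist_zero_right] at this
  simp only [Real.norm_eq_abs, Pi.add_apply]
  linarith [abs_sub_abs_le_abs_sub (g x) (g 0)]

theorem integral_sub_integral_le_of_lipschitzWith_one {ν₁ ν₂ : Measure E}
    [IsProbabilityMeasure ν₁] [IsProbabilityMeasure ν₂] (h₁ : Integrable (‖·‖) ν₁)
    (h₂ : Integrable (‖·‖) ν₂) {g : E → ℝ} (hg : LipschitzWith 1 g) :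
    ∫ x, g x ∂ν₁ - ∫ x, g x ∂ν₂ ≤ ∫ x, ‖x‖ ∂ν₁ + ∫ x, ‖x‖ ∂ν₂ := by
  have hg0 : ∀ x, |g x - g 0| ≤ ‖x‖ := fun x ↦ by
    simpa [Real.dist_eq] using hg.dist_le_mul x 0
  have hup : ∫ x, g x ∂ν₁ ≤ ∫ x, (g 0 + ‖x‖) ∂ν₁ :=
    integral_mono (hg.integrable_of_integrable_norm h₁) ((integrable_const _).add h₁)
      fun x ↦ by linarith [(abs_le.1 (hg0 x)).2]
  have hlow : ∫ x, (g 0 - ‖x‖) ∂ν₂ ≤ ∫ x, g x ∂ν₂ :=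
    integral_mono ((integrable_const _).sub h₂) (hg.integrable_of_integrable_norm h₂)
      fun x ↦ by linarith [(abs_le.1 (hg0 x)).1]
  rw [integral_add (integrable_const _) h₁] at hup
  rw [integral_sub (integrable_const _) h₂] at hlow
  simp only [integral_const, probReal_univ, smul_eq_mul, one_mul] at hup hlow
  linarith

theorem bddAbove_range_integral_sub_integral {ν₁ ν₂ : Measure E}
    [IsProbabilityMeasure ν₁] [IsProbabilityMeasure ν₂] (h₁ : Integrable (‖·‖) ν₁)
    (h₂ : Integrable (‖·‖) ν₂) :
    BddAbove (Set.range fun g : {g : E → ℝ // LipschitzWith 1 g} ↦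
      ∫ x, g.1 x ∂ν₁ - ∫ x, g.1 x ∂ν₂) :=
  ⟨_, Set.forall_mem_range.2 fun g ↦ integral_sub_integral_le_of_lipschitzWith_one h₁ h₂ g.2⟩

theorem ciSup_sub_ciSup_le {ι : Sort*} [Nonempty ι] {a b : ι → ℝ} (hb : BddAbove (Set.range b))
    {c : ℝ} (h : ∀ i, a i - b i ≤ c) : (⨆ i, a i) - ⨆ i, b i ≤ c :=
  sub_le_iff_le_add.2 <| ciSup_le fun i ↦ by linarith [le_ciSup hb i, h i]

theorem abs_ciSup_sub_ciSup_le {ι : Sort*} [Nonempty ι] {a b : ι → ℝ}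
    (ha : BddAbove (Set.range a)) (hb : BddAbove (Set.range b)) {c : ℝ}
    (h : ∀ i, |a i - b i| ≤ c) : |(⨆ i, a i) - ⨆ i, b i| ≤ c :=
  abs_sub_le_iff.2 ⟨ciSup_sub_ciSup_le hb fun i ↦ (abs_sub_le_iff.1 (h i)).1,
    ciSup_sub_ciSup_le ha fun i ↦ (abs_sub_le_iff.1 (h i)).2⟩

instance : Nonempty {g : E → ℝ // LipschitzWith 1 g} :=
  ⟨⟨0, (LipschitzWith.const 0).weaken zero_le_one⟩⟩

theorem abs_kantorovich_sub_kantorovich_le {ν₁ ν₂ μ : Measure E} [IsProbabilityMeasure ν₁]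
    [IsProbabilityMeasure ν₂] [IsProbabilityMeasure μ] (h₁ : Integrable (‖·‖) ν₁)
    (h₂ : Integrable (‖·‖) ν₂) (hμ : Integrable (‖·‖) μ) {c : ℝ}
    (h : ∀ g : E → ℝ, LipschitzWith 1 g → |∫ x, g x ∂ν₁ - ∫ x, g x ∂ν₂| ≤ c) :
    |kantorovich ν₁ μ - kantorovich ν₂ μ| ≤ c :=
  abs_ciSup_sub_ciSup_le (bddAbove_range_integral_sub_integral h₁ hμ)
    (bddAbove_range_integral_sub_integral h₂ hμ) fun g ↦ by simpa using h g.1 g.2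

end Kantorovich

section Empirical

open scoped ENNReal

variable {E : Type*} [MeasurableSpace E] {n : ℕ}

def empiricalMeasure (w : Fin n → E) : Measure E :=
  (n : ℝ≥0∞)⁻¹ • ∑ i, Measure.dirac (w i)

theorem isProbabilityMeasure_empiricalMeasure (hn : n ≠ 0) (w : Fin n → E) :
    IsProbabilityMeasure (empiricalMeasure w) :=
  ⟨by simp [empiricalMeasure, ENNReal.inv_mul_cancel (Nat.cast_ne_zero.2 hn)]⟩

variable [MeasurableSingletonClass E]

theorem integrable_empiricalMeasure (hn : n ≠ 0) (f : E → ℝ) (w : Fin n → E) :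
    Integrable f (empiricalMeasure w) :=
  (integrable_finsetSum_measure.2 fun i _ ↦ integrable_dirac (by simp)).smul_measure
    (by simpa using hn)

theorem integral_empiricalMeasure (f : E → ℝ) (w : Fin n → E) :
    ∫ x, f x ∂empiricalMeasure w = (n : ℝ)⁻¹ * ∑ i, f (w i) := by
  rw [empiricalMeasure, integral_smul_measure,
    integral_finsetSum_measure fun i _ ↦ integrable_dirac (by simp)]
  simp [integral_dirac]

end Empirical

theorem sepLip_kantorovich_empiricalMeasure {E : Type*} [NormedAddCommGroup E] [MeasurableSpace E]
    [BorelSpace E] {n : ℕ} (hn : n ≠ 0) {μ : Measure E} [IsProbabilityMeasure μ]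
    (hμ : Integrable (‖·‖) μ) :
    SepLip (fun w : Fin n → E ↦ kantorovich (empiricalMeasure w) μ) fun _ ↦ (n : ℝ)⁻¹ := by
  intro w j y
  have := isProbabilityMeasure_empiricalMeasure hn w
  have := isProbabilityMeasure_empiricalMeasure hn (update w j y)
  refine abs_kantorovich_sub_kantorovich_le (integrable_empiricalMeasure hn _ _)
    (integrable_empiricalMeasure hn _ _) hμ fun g hg ↦ ?_
  rw [integral_empiricalMeasure, integral_empiricalMeasure, ← mul_sub, ← Finset.sum_sub_distrib,
    Finset.sum_eq_single j (fun i _ hij ↦ by simp [update_of_ne hij]) (by simp), update_self,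
    abs_mul, abs_inv, Nat.abs_cast]
  gcongr
  simpa [Real.dist_eq] using hg.dist_le_mul (w j) y

section SubGaussian

variable {Ω : Type*} [MeasurableSpace Ω] {μ : Measure Ω}

theorem ProbabilityTheory.HasSubgaussianMGF.mono {X : Ω → ℝ} {c c' : ℝ≥0}
    (h : HasSubgaussianMGF X c μ) (hc : c ≤ c') : HasSubgaussianMGF X c' μ :=
  ⟨h.integrable_exp_mul, fun t ↦ (h.mgf_le t).trans <| exp_le_exp.2 <| by gcongr⟩

theorem hasSubgaussianMGF_of_abs_sub_le [IsProbabilityMeasure μ] {X : Ω → ℝ}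
    (hX : AEMeasurable X μ) {c : ℝ≥0} (h : ∀ ω ω', |X ω - X ω'| ≤ c) :
    HasSubgaussianMGF (fun ω ↦ X ω - μ[X]) (c ^ 2) μ := by
  obtain ⟨ω₀⟩ := nonempty_of_isProbabilityMeasure μ
  convert hasSubgaussianMGF_of_mem_Icc hX (a := X ω₀ - c) (b := X ω₀ + c)
    (Filter.Eventually.of_forall fun ω ↦ by
      have := abs_le.1 (h ω ω₀)
      constructor <;> linarith)
  ext
  simp only [add_sub_sub_cancel, NNReal.coe_div, coe_nnnorm, Real.norm_eq_abs]
  rw [abs_of_nonneg (by positivity)]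
  push_cast
  ring

theorem integrable_exp_mul_of_ae_abs_le [IsFiniteMeasure μ] {X : Ω → ℝ} (hX : AEMeasurable X μ)
    {B : ℝ} (hB : ∀ᵐ ω ∂μ, |X ω| ≤ B) (t : ℝ) : Integrable (fun ω ↦ exp (t * X ω)) μ :=
  integrable_exp_mul_of_mem_Icc hX (hB.mono fun _ h ↦ abs_le.1 h)

theorem integrable_of_abs_sub_le [IsProbabilityMeasure μ] {f : Ω → ℝ}
    (hf : AEStronglyMeasurable f μ) {B : ℝ} (h : ∀ ω ω', |f ω - f ω'| ≤ B) : Integrable f μ := by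
  obtain ⟨ω₀⟩ := nonempty_of_isProbabilityMeasure μ
  refine .of_bound hf (|f ω₀| + B) (Filter.Eventually.of_forall fun ω ↦ ?_)
  rw [Real.norm_eq_abs]
  linarith [h ω ω₀, abs_sub_abs_le_abs_sub (f ω) (f ω₀)]

theorem ProbabilityTheory.HasSubgaussianMGF.prod_of_sections {α β : Type*} [MeasurableSpace α]
    [MeasurableSpace β] {μ : Measure α} {ν : Measure β} [SFinite μ] [SFinite ν]
    {F : α × β → ℝ} (hF : AEStronglyMeasurable F (μ.prod ν)) {m : ℝ} {c₁ c₂ : ℝ≥0}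
    (hsec : ∀ᵐ y ∂ν, HasSubgaussianMGF (fun x ↦ F (x, y) - ∫ x', F (x', y) ∂μ) c₁ μ)
    (hmean : HasSubgaussianMGF (fun y ↦ ∫ x, F (x, y) ∂μ - m) c₂ ν) :
    HasSubgaussianMGF (fun p ↦ F p - m) (c₁ + c₂) (μ.prod ν) := by
  set g : β → ℝ := fun y ↦ ∫ x, F (x, y) ∂μ
  have hsplit : ∀ t p, exp (t * (F p - m)) = exp (t * (g p.2 - m)) * exp (t * (F p - g p.2)) :=
    fun t p ↦ by rw [← exp_add]; ring_nf
  have hsec_le : ∀ t, ∀ᵐ y ∂ν,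
      ∫ x, exp (t * (F (x, y) - m)) ∂μ ≤ exp (t * (g y - m)) * exp (c₁ * t ^ 2 / 2) := by
    intro t
    filter_upwards [hsec] with y hy
    simp_rw [hsplit t (_, y), integral_const_mul]
    gcongr
    exact hy.mgf_le t
  have hint : ∀ t, Integrable (fun p ↦ exp (t * (F p - m))) (μ.prod ν) := by
    intro t
    have hm : AEStronglyMeasurable (fun p ↦ exp (t * (F p - m))) (μ.prod ν) :=
      continuous_exp.comp_aestronglyMeasurable ((hF.sub aestronglyMeasurable_const).const_mul t)
    refine (integrable_prod_iff' hm).2 ⟨?_, ?_⟩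
    · filter_upwards [hsec] with y hy
      simp_rw [hsplit t (_, y)]
      exact (hy.integrable_exp_mul t).const_mul _
    · refine ((hmean.integrable_exp_mul t).mul_const (exp (c₁ * t ^ 2 / 2))).mono'
        hm.norm.prod_swap.integral_prod_right' ?_
      filter_upwards [hsec_le t] with y hy
      simpa [Real.norm_of_nonneg (integral_nonneg fun _ ↦ (exp_pos _).le)] using hy
  refine ⟨hint, fun t ↦ ?_⟩
  calc mgf (fun p ↦ F p - m) (μ.prod ν) t
      = ∫ y, ∫ x, exp (t * (F (x, y) - m)) ∂μ ∂ν := integral_prod_symm _ (hint t)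
    _ ≤ ∫ y, exp (t * (g y - m)) * exp (c₁ * t ^ 2 / 2) ∂ν :=
      integral_mono_of_nonneg (.of_forall fun _ ↦ integral_nonneg fun _ ↦ (exp_pos _).le)
        ((hmean.integrable_exp_mul t).mul_const _) (hsec_le t)
    _ = mgf (fun y ↦ g y - m) ν t * exp (c₁ * t ^ 2 / 2) := integral_mul_const _ _
    _ ≤ exp (c₂ * t ^ 2 / 2) * exp (c₁ * t ^ 2 / 2) := by gcongr; exact hmean.mgf_le t
    _ = exp (↑(c₁ + c₂) * t ^ 2 / 2) := by rw [← exp_add, NNReal.coe_add]; ring_nf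

end SubGaussian

theorem hasSubgaussianMGF_pi_of_hasBoundedDifferences {α : Type*} [MeasurableSpace α]
    {P : Measure α} [IsProbabilityMeasure P] :
    ∀ {n : ℕ} {G : (Fin n → α) → ℝ} {c : Fin n → ℝ≥0}, Measurable G →
      HasBoundedDifferences G (fun j _ _ ↦ c j) →
      HasSubgaussianMGF (fun ξ ↦ G ξ - ∫ ξ', G ξ' ∂Measure.pi fun _ ↦ P) (∑ j, c j ^ 2)
        (Measure.pi fun _ ↦ P)
  | 0, G, c, _, _ => by
    have hG : ∀ ξ, G ξ = G isEmptyElim := fun ξ ↦ congrArg G (Subsingleton.elim _ _)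
    simp [hG, HasSubgaussianMGF.fun_zero]
  | n + 1, G, c, hG, hdiff => by
    set ν := Measure.pi fun _ : Fin n ↦ P
    set e := MeasurableEquiv.piFinSuccAbove (fun _ : Fin (n + 1) ↦ α) 0
    have he : MeasurePreserving e (Measure.pi fun _ ↦ P) (P.prod ν) :=
      measurePreserving_piFinSuccAbove (fun _ ↦ P) 0
    have he_symm : ∀ a y, e.symm (a, y) = Fin.cons a y := fun a y ↦ by
      simp [e, MeasurableEquiv.piFinSuccAbove, Fin.insertNthEquiv, Fin.insertNth_zero']
    set Gc : α × (Fin n → α) → ℝ := G ∘ e.symm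
    have hGc : Measurable Gc := hG.comp e.symm.measurable
    have hGc_int : Integrable Gc (P.prod ν) :=
      integrable_of_abs_sub_le hGc.aestronglyMeasurable fun z z' ↦ hdiff.abs_sub_le_sum _ _
    have hsec : ∀ y, HasSubgaussianMGF (fun a ↦ Gc (a, y) - ∫ a', Gc (a', y) ∂P) (c 0 ^ 2) P :=
      fun y ↦ hasSubgaussianMGF_of_abs_sub_le (hGc.comp measurable_prodMk_right).aemeasurable
        fun a a' ↦ by
          simpa [Gc, he_symm, Fin.update_cons_zero] using hdiff (Fin.cons a y) 0 a'
    have hmean_diff : HasBoundedDifferences (fun y ↦ ∫ a, Gc (a, y) ∂P) fun j _ _ ↦ c j.succ :=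
      HasBoundedDifferences.integral (μ := P)
        (fun a y j b ↦ by simpa [Gc, he_symm, Fin.cons_update] using hdiff (Fin.cons a y) j.succ b)
        fun y ↦ integrable_of_abs_sub_le (hGc.comp measurable_prodMk_right).aestronglyMeasurable
          fun a a' ↦ hdiff.abs_sub_le_sum _ _
    have hmean := hasSubgaussianMGF_pi_of_hasBoundedDifferences (P := P)
      hGc.stronglyMeasurable.integral_prod_left'.measurable hmean_diff
    have hint : ∫ ξ, G ξ ∂Measure.pi (fun _ ↦ P) = ∫ y, ∫ a, Gc (a, y) ∂P ∂ν := by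
      rw [← integral_prod_symm _ hGc_int, ← he.integral_comp']
      simp [Gc]
    rw [← hint] at hmean
    have hprod := HasSubgaussianMGF.prod_of_sections hGc.aestronglyMeasurable
      (Filter.Eventually.of_forall hsec) hmean
    rw [← he.map_eq] at hprod
    simpa [Fin.sum_univ_succ, Gc, Function.comp_def] using hprod.of_map he.measurable.aemeasurable

theorem hasSubgaussianMGF_of_concentration {Ω E : Type*} [MeasurableSpace Ω] [PseudoMetricSpace E]
    {μ : Measure Ω} {n : ℕ} {Y : Ω → Fin n → E} {C : ℝ}
    (hconc : ∀ (K : (Fin n → E) → ℝ) (L : Fin n → ℝ), SepLip K L →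
      ∫ ω, exp (K (Y ω) - ∫ ω', K (Y ω') ∂μ) ∂μ ≤ exp (C * ∑ j, L j ^ 2))
    {K : (Fin n → E) → ℝ} {L : Fin n → ℝ} (hK : SepLip K L)
    (hint : ∀ t, Integrable (fun ω ↦ exp (t * (K (Y ω) - ∫ ω', K (Y ω') ∂μ))) μ) :
    HasSubgaussianMGF (fun ω ↦ K (Y ω) - ∫ ω', K (Y ω') ∂μ) (2 * C * ∑ j, L j ^ 2).toNNReal μ := by
  refine ⟨hint, fun t ↦ ?_⟩
  have htK : SepLip (fun w ↦ t * K w) fun j ↦ |t| * L j := fun w j a ↦ by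
    rw [← mul_sub, abs_mul, mul_assoc]
    exact mul_le_mul_of_nonneg_left (hK w j a) (abs_nonneg t)
  have hsum : ∑ j, (|t| * L j) ^ 2 = t ^ 2 * ∑ j, L j ^ 2 := by
    simp [mul_pow, Finset.mul_sum]
  calc mgf (fun ω ↦ K (Y ω) - ∫ ω', K (Y ω') ∂μ) μ t
      = ∫ ω, exp (t * K (Y ω) - ∫ ω', t * K (Y ω') ∂μ) ∂μ := by
        simp [mgf, integral_const_mul, mul_sub]
    _ ≤ exp (C * ∑ j, (|t| * L j) ^ 2) := hconc _ _ htK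
    _ ≤ exp ((2 * C * ∑ j, L j ^ 2).toNNReal * t ^ 2 / 2) := by
      rw [hsum]
      gcongr
      nlinarith [Real.le_coe_toNNReal (2 * C * ∑ j, L j ^ 2), sq_nonneg t]

theorem hasSubgaussianMGF_pi_of_sepLip {E : Type*} [NormedAddCommGroup E] [MeasurableSpace E]
    [BorelSpace E] [SecondCountableTopology E] {P : Measure E} [IsProbabilityMeasure P]
    (hP : ∀ᵐ a ∂P, ‖a‖ ≤ 1) {n : ℕ} {G : (Fin n → E) → ℝ} {ℓ : ℝ} (hG : SepLip G fun _ ↦ ℓ)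
    (hℓ : 0 ≤ ℓ) :
    HasSubgaussianMGF (fun ξ ↦ G ξ - ∫ ξ', G ξ' ∂Measure.pi fun _ ↦ P)
      (n * (2 * ℓ).toNNReal ^ 2) (Measure.pi fun _ ↦ P) := by
  -- truncating the noise to the unit ball does not change its law and bounds the differences
  set r : E → E := (Metric.closedBall 0 1).indicator id
  have hr : Measurable r := measurable_id.indicator measurableSet_closedBall
  have hr_norm : ∀ a, ‖r a‖ ≤ 1 := fun a ↦ by
    by_cases ha : a ∈ Metric.closedBall (0 : E) 1
    · rw [show r a = a from Set.indicator_of_mem ha _]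
      simpa using ha
    · simp [r, ha]
  have hr_ae : (fun ξ i ↦ r (ξ i)) =ᵐ[Measure.pi fun _ : Fin n ↦ P] id :=
    (Filter.eventually_all.2 fun i ↦ Measure.tendsto_eval_ae_ae.eventually hP).mono fun ξ hξ ↦
      funext fun i ↦ Set.indicator_of_mem (by simpa using hξ i) _
  have hdiff : HasBoundedDifferences (fun ξ ↦ G fun i ↦ r (ξ i)) fun _ _ _ ↦ (2 * ℓ).toNNReal := by
    intro ξ j a
    dsimp only
    rw [show (fun i ↦ r (update ξ j a i)) = update (fun i ↦ r (ξ i)) j (r a) from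
      funext fun i ↦ apply_update (fun _ ↦ r) ξ j a i]
    refine (hG _ j _).trans ?_
    rw [Real.coe_toNNReal _ (by positivity), mul_comm 2]
    gcongr
    exact (dist_le_norm_add_norm _ _).trans (by linarith [hr_norm (ξ j), hr_norm a])
  have hGr := hasSubgaussianMGF_pi_of_hasBoundedDifferences (P := P)
    (G := fun ξ ↦ G fun i ↦ r (ξ i)) ((hG.continuous hℓ).measurable.comp
      (measurable_pi_lambda _ fun i ↦ hr.comp (measurable_pi_apply i))) hdiff
  have hGr_ae : (fun ξ ↦ G fun i ↦ r (ξ i)) =ᵐ[Measure.pi fun _ : Fin n ↦ P] G :=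
    hr_ae.mono fun ξ hξ ↦ congrArg G hξ
  simp only [Finset.sum_const, Finset.card_univ, Fintype.card_fin, nsmul_eq_mul] at hGr
  refine hGr.congr (hGr_ae.mono fun ξ hξ ↦ ?_)
  simp only [hξ, integral_congr_ae hGr_ae]

theorem hasSubgaussianMGF_of_noisy_observations {Ω E : Type*} [MeasurableSpace Ω]
    [NormedAddCommGroup E] [NormedSpace ℝ E] [MeasurableSpace E] [BorelSpace E]
    [SecondCountableTopology E] {μ : Measure Ω} [IsProbabilityMeasure μ] {n : ℕ}
    {Y : Ω → Fin n → E} (hY : Measurable Y) {R : ℝ} (hYR : ∀ᵐ ω ∂μ, ‖Y ω‖ ≤ R) {C : ℝ}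
    (hconc : ∀ (K : (Fin n → E) → ℝ) (L : Fin n → ℝ), SepLip K L →
      ∫ ω, exp (K (Y ω) - ∫ ω', K (Y ω') ∂μ) ∂μ ≤ exp (C * ∑ j, L j ^ 2))
    {P : Measure E} [IsProbabilityMeasure P] (hP : ∀ᵐ a ∂P, ‖a‖ ≤ 1)
    {Φ : (Fin n → E) → ℝ} {ℓ : ℝ} (hΦ : SepLip Φ fun _ ↦ ℓ) (hℓ : 0 ≤ ℓ) (ε : ℝ) :
    HasSubgaussianMGF
      (fun p ↦ Φ (Y p.1 + ε • p.2) - ∫ p', Φ (Y p'.1 + ε • p'.2) ∂μ.prod (Measure.pi fun _ ↦ P))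
      ((2 * C * ∑ _j : Fin n, ℓ ^ 2).toNNReal + n * (2 * (ℓ * |ε|)).toNNReal ^ 2)
      (μ.prod (Measure.pi fun _ ↦ P)) := by
  set ν := Measure.pi fun _ : Fin n ↦ P
  set F : Ω × (Fin n → E) → ℝ := fun p ↦ Φ (Y p.1 + ε • p.2)
  have hF : Measurable F := (hΦ.continuous hℓ).measurable.comp
    ((hY.comp measurable_fst).add (measurable_snd.const_smul ε))
  have hF_le : ∀ ω ξ, ‖Y ω‖ ≤ R → |F (ω, ξ)| ≤ |Φ 0| + n * ℓ * (R + |ε| * ‖ξ‖) := by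
    intro ω ξ hω
    have hlip := hΦ.dist_le hℓ (Y ω + ε • ξ) 0
    rw [Real.dist_eq, dist_zero_right] at hlip
    have hnorm : ‖Y ω + ε • ξ‖ ≤ R + |ε| * ‖ξ‖ := (norm_add_le _ _).trans (by simp [norm_smul, hω])
    have hscaled : n * ℓ * ‖Y ω + ε • ξ‖ ≤ n * ℓ * (R + |ε| * ‖ξ‖) := by gcongr
    linarith [abs_sub_abs_le_abs_sub (F (ω, ξ)) (Φ 0)]
  have hF_sec : ∀ ξ, ∀ᵐ ω ∂μ, |F (ω, ξ)| ≤ |Φ 0| + n * ℓ * (R + |ε| * ‖ξ‖) :=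
    fun ξ ↦ hYR.mono fun ω hω ↦ hF_le ω ξ hω
  have hF_int_sec : ∀ ξ, Integrable (fun ω ↦ F (ω, ξ)) μ := fun ξ ↦
    .of_bound (hF.comp measurable_prodMk_right).aestronglyMeasurable _ (hF_sec ξ)
  have hsec : ∀ ξ, HasSubgaussianMGF (fun ω ↦ F (ω, ξ) - ∫ ω', F (ω', ξ) ∂μ)
      (2 * C * ∑ _j : Fin n, ℓ ^ 2).toNNReal μ := fun ξ ↦
    hasSubgaussianMGF_of_concentration hconc (K := fun z ↦ Φ (z + ε • ξ))
      (by simpa [add_comm] using hΦ.comp_add_smul_s10 (ε • ξ) 1) fun t ↦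
        integrable_exp_mul_of_ae_abs_le ((hF.comp measurable_prodMk_right).sub_const _).aemeasurable
          ((hF_sec ξ).mono fun ω hω ↦ (abs_sub _ _).trans (add_le_add hω le_rfl)) t
  have hmean := hasSubgaussianMGF_pi_of_sepLip hP
    (HasBoundedDifferences.integral (μ := μ)
      (fun ω ↦ (hΦ.comp_add_smul_s10 (Y ω) ε).hasBoundedDifferences) hF_int_sec) (by positivity)
  have hνball : ∀ᵐ ξ ∂ν, ‖ξ‖ ≤ 1 :=
    (Filter.eventually_all.2 fun i ↦ Measure.tendsto_eval_ae_ae.eventually hP).mono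
      fun ξ hξ ↦ (pi_norm_le_iff_of_nonneg zero_le_one).2 hξ
  have hF_int : Integrable F (μ.prod ν) := .of_bound hF.aestronglyMeasurable
    (|Φ 0| + n * ℓ * (R + |ε| * 1))
    ((Measure.quasiMeasurePreserving_fst.ae hYR).and (Measure.quasiMeasurePreserving_snd.ae hνball)
      |>.mono fun p ⟨h₁, h₂⟩ ↦ (hF_le p.1 p.2 h₁).trans (by gcongr))
  rw [← integral_prod_symm F hF_int] at hmean
  exact HasSubgaussianMGF.prod_of_sections hF.aestronglyMeasurable (.of_forall hsec) hmean

theorem noisy_variance_proxy_le (C : ℝ) {ε : ℝ} (hε : 0 < ε) {n : ℕ} (hn : 1 ≤ n) :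
    (2 * C * ∑ _j : Fin n, ((n : ℝ)⁻¹) ^ 2).toNNReal + n * (2 * ((n : ℝ)⁻¹ * |ε|)).toNNReal ^ 2
      ≤ (2 * max C 2 * (1 + ε ^ 2) / n).toNNReal := by
  have hn' : (0 : ℝ) < n := by positivity
  rw [← NNReal.coe_le_coe, NNReal.coe_add, NNReal.coe_mul, NNReal.coe_pow, NNReal.coe_natCast,
    Real.coe_toNNReal', Real.coe_toNNReal _ (by positivity), Real.coe_toNNReal _ (by positivity)]
  simp only [Finset.sum_const, Finset.card_univ, Fintype.card_fin, nsmul_eq_mul, abs_of_pos hε]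
  have h₁ : max (2 * C * (n * (n : ℝ)⁻¹ ^ 2)) 0 ≤ 2 * max C 2 / n := by
    rw [show (n : ℝ) * (n : ℝ)⁻¹ ^ 2 = (n : ℝ)⁻¹ by field_simp]
    exact max_le (by rw [← div_eq_mul_inv]; gcongr; exact le_max_left C 2) (by positivity)
  have h₂ : n * (2 * ((n : ℝ)⁻¹ * ε)) ^ 2 ≤ 2 * max C 2 * ε ^ 2 / n := by
    rw [show n * (2 * ((n : ℝ)⁻¹ * ε)) ^ 2 = 2 * 2 * ε ^ 2 / n by field_simp]
    gcongr
    exact le_max_right C 2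
  calc _ ≤ 2 * max C 2 / n + 2 * max C 2 * ε ^ 2 / n := add_le_add h₁ h₂
    _ = _ := by ring

theorem observed_empirical_measure_exponential_general {d : ℕ}
    (X : Set (EuclideanSpace ℝ (Fin d))) (hX : IsCompact X)
    (T : EuclideanSpace ℝ (Fin d) → EuclideanSpace ℝ (Fin d))
    (hT : Measurable T) (hTX : Set.MapsTo T X X)
    (μ : Measure (EuclideanSpace ℝ (Fin d))) [IsProbabilityMeasure μ]
    (hμX : μ X = 1)
    (C : ℝ)
    (hconc : ∀ (n : ℕ), 1 ≤ n → ∀ (K : (Fin n → EuclideanSpace ℝ (Fin d)) → ℝ)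
      (L : Fin n → ℝ), SepLip K L →
      ∫ x, Real.exp (K (fun i => T^[(i : ℕ)] x)
          - ∫ z, K (fun i => T^[(i : ℕ)] z) ∂μ) ∂μ
        ≤ Real.exp (C * ∑ j, L j ^ 2))
    (P : Measure (EuclideanSpace ℝ (Fin d))) [IsProbabilityMeasure P]
    (hP : ∀ᵐ ξ ∂P, ‖ξ‖ ≤ 1) :
    ∃ D : ℝ, 0 < D ∧ ∀ ε : ℝ, 0 < ε → ∀ (n : ℕ), 1 ≤ n → ∀ t : ℝ, 0 < t →
      ((μ.prod (Measure.pi fun _ : Fin n => P))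
          {p | t + (∫ p', kantorovich (obsEmpirical T ε p') μ
                ∂(μ.prod (Measure.pi fun _ : Fin n => P)))
            < kantorovich (obsEmpirical T ε p) μ}).toReal
        ≤ Real.exp (-(t ^ 2 * (n : ℝ)) / (4 * D * (1 + ε ^ 2))) := by
  obtain ⟨R, hR0, hR⟩ := hX.isBounded.exists_pos_norm_le
  have hμX' : ∀ᵐ x ∂μ, x ∈ X :=
    (ae_mem_iff_measure_eq hX.measurableSet.nullMeasurableSet).2 (by simp [hμX])
  have hμnorm : Integrable (‖·‖) μ :=
    .of_bound measurable_norm.aestronglyMeasurable R (hμX'.mono fun x hx ↦ by simpa using hR x hx)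
  have horbit : ∀ n : ℕ, ∀ᵐ x ∂μ, ‖fun i : Fin n ↦ T^[i] x‖ ≤ R := fun n ↦
    hμX'.mono fun x hx ↦ (pi_norm_le_iff_of_nonneg hR0.le).2 fun i ↦ hR _ (hTX.iterate i hx)
  refine ⟨max C 2, by positivity, fun ε hε n hn t ht ↦ ?_⟩
  -- `obsEmpirical T ε p` unfolds to `empiricalMeasure ((fun i ↦ T^[i] p.1) + ε • p.2)`
  have hsub := hasSubgaussianMGF_of_noisy_observations
    (measurable_pi_lambda _ fun i ↦ hT.iterate i) (horbit n) (hconc n hn) hP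
    (sepLip_kantorovich_empiricalMeasure (by omega) hμnorm) (by positivity) ε
  have hc := noisy_variance_proxy_le C hε hn
  have hchernoff := (hsub.mono hc).measure_ge_le ht.le
  refine (ENNReal.toReal_mono (measure_ne_top _ _) (measure_mono fun p hp ↦ ?_)).trans
    (hchernoff.trans_eq ?_)
  · exact le_sub_iff_add_le.2 (show t + _ < _ from hp).le
  · rw [Real.coe_toNNReal _ (by positivity)]
    congr 1
    field_simp
    ring

/-- Fluctuation bound for the Kantorovich distance between the observed empirical
measure and `μ`, for a system satisfying the exponential concentration inequality. -/
theorem observed_empirical_measure_exponential {d : ℕ}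
    (X : Set (EuclideanSpace ℝ (Fin d))) (hX : IsCompact X)
    (T : EuclideanSpace ℝ (Fin d) → EuclideanSpace ℝ (Fin d))
    (hT : Measurable T) (hTX : Set.MapsTo T X X)
    (μ : Measure (EuclideanSpace ℝ (Fin d))) [IsProbabilityMeasure μ]
    (hμX : μ X = 1) (hinv : μ.map T = μ)
    (C : ℝ) (hC : 0 < C)
    (hconc : ∀ (n : ℕ), 1 ≤ n → ∀ (K : (Fin n → EuclideanSpace ℝ (Fin d)) → ℝ)
      (L : Fin n → ℝ), SepLip K L →
      ∫ x, Real.exp (K (fun i => T^[(i : ℕ)] x)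
          - ∫ z, K (fun i => T^[(i : ℕ)] z) ∂μ) ∂μ
        ≤ Real.exp (C * ∑ j, L j ^ 2))
    (P : Measure (EuclideanSpace ℝ (Fin d))) [IsProbabilityMeasure P]
    (hP : ∀ᵐ ξ ∂P, ‖ξ‖ ≤ 1) :
    ∃ D : ℝ, 0 < D ∧ ∀ ε : ℝ, 0 < ε → ∀ (n : ℕ), 1 ≤ n → ∀ t : ℝ, 0 < t →
      ((μ.prod (Measure.pi fun _ : Fin n => P))
          {p | t + (∫ p', kantorovich (obsEmpirical T ε p') μ
                ∂(μ.prod (Measure.pi fun _ : Fin n => P)))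
            < kantorovich (obsEmpirical T ε p) μ}).toReal
        ≤ Real.exp (-(t ^ 2 * (n : ℝ)) / (4 * D * (1 + ε ^ 2))) :=
  observed_empirical_measure_exponential_general X hX T hT hTX μ hμX C hconc P hP
end
end
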